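/- arXiv:2209.09571 — 12 statements merged into one kernel-verified Lean document; each statement's English description precedes it below -/
import Mathlib

section
/- Let S be a semigroup, T a subsemigroup of S, a : T → ℂ an additive function on T, and I a two-sided ideal of S such that T ∩ I ≠ ∅. If a(x) = 0 for all x ∈ T ∩ I, then a = 0 on all of T. -/
open scoped BigOperators

variable {S : Type*}

/-- A multiplicative function on a semigroup `S`. -/
def IsMultiplicativeFn [Semigroup S] (χ : S → ℂ) : Prop :=
  ∀ x y, χ (x * y) = χ x * χ y

/-- An additive function on a semigroup `S`. -/
def IsAdditiveFn [Semigroup S] (a : S → ℂ) : Prop :=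
  ∀ x y, a (x * y) = a x + a y

/-- A function additive on a subset `T` of `S`. -/
def IsAdditiveOnSet [Semigroup S] (a : S → ℂ) (T : Set S) : Prop :=
  ∀ x ∈ T, ∀ y ∈ T, a (x * y) = a x + a y

/-- A function multiplicative on a subset `T` of `S`. -/
def IsMultiplicativeOnSet [Semigroup S] (χ : S → ℂ) (T : Set S) : Prop :=
  ∀ x ∈ T, ∀ y ∈ T, χ (x * y) = χ x * χ y

/-- `Ψ_χ(φ) (x) = χ(x) φ(x)` for `x ∉ I_χ` and `0` on `I_χ = {x | χ x = 0}`.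
Functions on `S ∖ I_χ` are represented as functions on `S` whose values
off `{x | χ x ≠ 0}` are irrelevant. -/
noncomputable def PsiFn [Semigroup S] (χ φ : S → ℂ) : S → ℂ :=
  fun x => if χ x = 0 then 0 else χ x * φ x

/-- `S` is generated by its squares. -/
def SquareGenerated (S : Type*) [Semigroup S] : Prop :=
  ∀ x : S, x ∈ Subsemigroup.closure {y : S | ∃ z : S, y = z * z}

/-- If an additive function on a subsemigroup `T` vanishes on the
(nonempty) intersection of `T` with a two-sided ideal `I` of `S`, then it
vanishes on all of `T`. -/
theorem stmt0 [Semigroup S] (T : Subsemigroup S) (a : S → ℂ)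
    (ha : IsAdditiveOnSet a (T : Set S))
    (I : Set S) (hIne : I.Nonempty)
    (hIdeal : ∀ x ∈ I, ∀ s : S, s * x ∈ I ∧ x * s ∈ I)
    (hTI : ((T : Set S) ∩ I).Nonempty)
    (hzero : ∀ x ∈ (T : Set S) ∩ I, a x = 0) :
    ∀ x ∈ T, a x = 0 := by
  obtain ⟨y, hyT, hyI⟩ := hTI
  intro x hx
  have hxyI : x * y ∈ I := (hIdeal y hyI x).1
  have hxyT : x * y ∈ (T : Set S) := T.mul_mem hx hyT
  have h1 : a (x * y) = 0 := hzero _ ⟨hxyT, hxyI⟩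
  have h2 : a (x * y) = a x + a y := ha x hx y hyT
  have hy0 : a y = 0 := hzero _ ⟨hyT, hyI⟩
  rw [h2, hy0, add_zero] at h1
  exact h1
end

section
/- Let S be a semigroup, let μ₁,…,μ_N be N pairwise distinct multiplicative functions on S, and let A₁,…,A_N be additive functions on S. If Σ_{i=1}^N μ_i(x)A_i(x) = Σ_{j=1}^M c_j χ_j(x) for all x ∈ S, where c₁,…,c_M ∈ ℂ and χ₁,…,χ_M are multiplicative functions on S, then μ_i(x)A_i(x) = 0 for all x ∈ S and each i = 1,…,N. -/
open scoped BigOperators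

variable {S : Type*}

/-!
Write `V` for the span of the multiplicative functions and, for `y : S` and `c : ℂ`, let
`Δ f := f (· * y) - c • f`. This operator preserves `V`, sends a multiplicative `χ` to
`(χ y - c) • χ`, and sends `μ * A` to `μ * ((μ y - c) • A)` modulo `ℂ μ`. Choosing `c = μₐ y`
for a point `y` where `μᵢ y ≠ μₐ y` removes the `a`-th term of `∑ μᵢ Aᵢ ∈ V` while keeping the
`i`-th, so induction on the number of terms reduces the theorem to a single term `μ * A ∈ V`.
There the same operator removes, one at a time, the multiplicative functions different from `μ`
in a representation of `μ * A`, leaving `μ * A = b • μ`; evaluating at `x` and `x * x` then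
gives `b μ(x)² = 0`.
-/

open Submodule

def multSpan (S : Type*) [Semigroup S] : Submodule ℂ (S → ℂ) :=
  span ℂ {f | IsMultiplicativeFn f}

def shiftSub [Semigroup S] (y : S) (c : ℂ) : (S → ℂ) →ₗ[ℂ] (S → ℂ) :=
  LinearMap.funLeft ℂ ℂ (· * y) - c • LinearMap.id

lemma shiftSub_apply [Semigroup S] (y : S) (c : ℂ) (f : S → ℂ) (x : S) :
    shiftSub y c f x = f (x * y) - c * f x :=
  rfl

lemma IsAdditiveFn.smul [Semigroup S] {A : S → ℂ} (hA : IsAdditiveFn A) (c : ℂ) :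
    IsAdditiveFn (c • A) := fun x y => by
  simp only [Pi.smul_apply, smul_eq_mul, hA x y, mul_add]

namespace IsMultiplicativeFn

variable [Semigroup S] {μ : S → ℂ}

lemma shiftSub_self (hμ : IsMultiplicativeFn μ) (y : S) (c : ℂ) :
    shiftSub y c μ = (μ y - c) • μ := by
  ext x
  simp only [shiftSub_apply, hμ x y, Pi.smul_apply, smul_eq_mul]
  ring

lemma shiftSub_mul (hμ : IsMultiplicativeFn μ) {A : S → ℂ} (hA : IsAdditiveFn A)
    (y : S) (c : ℂ) :
    shiftSub y c (μ * A) = μ * ((μ y - c) • A) + (μ y * A y) • μ := by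
  ext x
  simp only [shiftSub_apply, Pi.mul_apply, Pi.add_apply, Pi.smul_apply, smul_eq_mul,
    hμ x y, hA x y]
  ring

lemma shiftSub_mem_span_of_mem_span_insert (hμ : IsMultiplicativeFn μ) {T : Set (S → ℂ)}
    (hT : ∀ χ ∈ T, IsMultiplicativeFn χ) (y : S) {f : S → ℂ}
    (hf : f ∈ span ℂ (insert μ T)) : shiftSub y (μ y) f ∈ span ℂ T := by
  suffices span ℂ (insert μ T) ≤ (span ℂ T).comap (shiftSub y (μ y)) from this hf
  rw [span_le, Set.insert_subset_iff]
  refine ⟨?_, fun χ hχ => ?_⟩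
  · simp [hμ.shiftSub_self]
  · rw [SetLike.mem_coe, mem_comap, (hT χ hχ).shiftSub_self]
    exact smul_mem _ _ (subset_span hχ)

lemma mul_eq_zero_of_mul_eq_smul (hμ : IsMultiplicativeFn μ) {A : S → ℂ}
    (hA : IsAdditiveFn A) {b : ℂ} (h : μ * A = b • μ) : μ * A = 0 := by
  have hb : ∀ x, b * μ x ^ 2 = 0 := fun x => by
    have hx := congrFun h x
    have hxx := congrFun h (x * x)
    simp only [Pi.mul_apply, Pi.smul_apply, smul_eq_mul, hμ x x, hA x x] at hx hxx
    linear_combination hxx - (2 * μ x) * hx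
  ext x
  rw [h, Pi.smul_apply, smul_eq_mul, Pi.zero_apply]
  rcases mul_eq_zero.1 (hb x) with hb0 | hμ0
  · rw [hb0, zero_mul]
  · rw [pow_eq_zero_iff two_ne_zero |>.1 hμ0, mul_zero]

lemma mul_eq_zero_of_mem_span_insert (hμ : IsMultiplicativeFn μ) (T : Finset (S → ℂ))
    (hT : ∀ χ ∈ T, IsMultiplicativeFn χ) {A : S → ℂ} (hA : IsAdditiveFn A)
    (h : μ * A ∈ span ℂ (insert μ ↑T)) : μ * A = 0 := by
  classical
  induction T using Finset.induction_on generalizing A with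
  | empty =>
    obtain ⟨b, hb⟩ := mem_span_singleton.1 (by simpa using h)
    exact hμ.mul_eq_zero_of_mul_eq_smul hA hb.symm
  | insert χ T _ ih =>
    have hT' : ∀ χ ∈ T, IsMultiplicativeFn χ := fun χ' hχ' =>
      hT χ' (Finset.mem_insert_of_mem hχ')
    rw [Finset.coe_insert] at h
    by_cases hχμ : χ = μ
    · subst hχμ
      exact ih hT' hA (by rwa [Set.insert_idem] at h)
    obtain ⟨y, hy⟩ := Function.ne_iff.1 hχμ
    rw [Set.insert_comm] at h
    have hΔ := (hT χ (Finset.mem_insert_self χ T)).shiftSub_mem_span_of_mem_span_insert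
      (T := insert μ ↑T) (Set.forall_mem_insert.2 ⟨hμ, hT'⟩) y h
    rw [hμ.shiftSub_mul hA,
      Submodule.add_mem_iff_left _ (smul_mem _ _ (subset_span (Set.mem_insert μ _)))] at hΔ
    have h0 := ih hT' (hA.smul _) hΔ
    rwa [mul_smul_comm, smul_eq_zero, or_iff_right (sub_ne_zero.2 hy.symm)] at h0

lemma mul_eq_zero_of_mem_multSpan (hμ : IsMultiplicativeFn μ) {A : S → ℂ}
    (hA : IsAdditiveFn A) (h : μ * A ∈ multSpan S) : μ * A = 0 := by
  obtain ⟨T, hTsub, hT⟩ := mem_span_finite_of_mem_span h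
  exact hμ.mul_eq_zero_of_mem_span_insert T hTsub hA (span_mono (Set.subset_insert _ _) hT)

end IsMultiplicativeFn

theorem mul_eq_zero_of_sum_mem_multSpan [Semigroup S] {ι : Type*} {μ : ι → S → ℂ}
    (hμ : ∀ i, IsMultiplicativeFn (μ i)) (hinj : Function.Injective μ) (s : Finset ι)
    {A : ι → S → ℂ} (hA : ∀ i, IsAdditiveFn (A i)) (h : ∑ i ∈ s, μ i * A i ∈ multSpan S) :
    ∀ i ∈ s, μ i * A i = 0 := by
  classical
  induction s using Finset.induction_on generalizing A with
  | empty => simp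
  | insert a s has ih =>
    have hs : ∀ i ∈ s, μ i * A i = 0 := by
      intro i hi
      obtain ⟨y, hy⟩ := Function.ne_iff.1 (hinj.ne (ne_of_mem_of_not_mem hi has))
      have hΔ : shiftSub y (μ a y) (∑ k ∈ insert a s, μ k * A k) ∈ multSpan S :=
        (hμ a).shiftSub_mem_span_of_mem_span_insert (T := {f | IsMultiplicativeFn f})
          (fun _ => id) y (by rwa [Set.insert_eq_of_mem (hμ a)])
      have hreduced : ∑ k ∈ s, μ k * ((μ k y - μ a y) • A k) ∈ multSpan S := by
        have hΔ_eq : shiftSub y (μ a y) (∑ k ∈ insert a s, μ k * A k) =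
            ∑ k ∈ s, μ k * ((μ k y - μ a y) • A k) +
              ∑ k ∈ insert a s, (μ k y * A k y) • μ k := by
          simp only [map_sum, fun k => (hμ k).shiftSub_mul (hA k), Finset.sum_add_distrib]
          rw [Finset.sum_insert has, sub_self, zero_smul, mul_zero, zero_add]
        rw [hΔ_eq] at hΔ
        exact (Submodule.add_mem_iff_left _
          (sum_mem fun k _ => smul_mem _ _ (subset_span (hμ k)))).1 hΔ
      have h0 := ih (fun k => (hA k).smul _) hreduced i hi
      rwa [mul_smul_comm, smul_eq_zero, or_iff_right (sub_ne_zero.2 hy)] at h0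
    intro i hi
    rcases Finset.mem_insert.1 hi with rfl | hi
    · rw [Finset.sum_insert has, Finset.sum_eq_zero hs, add_zero] at h
      exact (hμ i).mul_eq_zero_of_mem_multSpan (hA i) h
    · exact hs i hi

/-- If a sum of products of pairwise distinct multiplicative
functions with additive functions equals a linear combination of multiplicative
functions, then each product vanishes identically. -/
theorem stmt1 [Semigroup S] (N M : ℕ)
    (μ : Fin N → S → ℂ) (A : Fin N → S → ℂ)
    (c : Fin M → ℂ) (χ : Fin M → S → ℂ)
    (hμ : ∀ i, IsMultiplicativeFn (μ i))
    (hμne : ∀ i j, i ≠ j → μ i ≠ μ j)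
    (hA : ∀ i, IsAdditiveFn (A i))
    (hχ : ∀ j, IsMultiplicativeFn (χ j))
    (h : ∀ x : S, ∑ i, μ i x * A i x = ∑ j, c j * χ j x) :
    ∀ i, ∀ x : S, μ i x * A i x = 0 := by
  have hinj : Function.Injective μ := fun i j hij => by_contra fun hne => hμne i j hne hij
  have hsum : ∑ i, μ i * A i ∈ multSpan S := by
    have heq : ∑ i, μ i * A i = ∑ j, c j • χ j := funext fun x => by simpa using h x
    rw [heq]
    exact sum_mem fun j _ => smul_mem _ _ (subset_span (hχ j))
  intro i x
  exact congrFun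
    (mul_eq_zero_of_sum_mem_multSpan hμ hinj Finset.univ hA hsum i (Finset.mem_univ i)) x
end

section
/- Let S be a semigroup, μ₁,μ₂ multiplicative functions on S (not necessarily distinct), and A₁,A₂ additive functions on S. If μ₁(x)A₁(x) + μ₂(x)A₂(x) = Σ_{j=1}^M c_j χ_j(x) for all x ∈ S, where c_j ∈ ℂ and χ_j are multiplicative functions on S, then μ₁(x)A₁(x) + μ₂(x)A₂(x) = 0 for all x ∈ S. -/
open scoped BigOperators

variable {S : Type*}

section StmtTwoAux

open Polynomial Finset

noncomputable def applyOp (Q : Polynomial ℂ) (f : ℕ → ℂ) : ℕ → ℂ :=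
  fun n => ∑ k ∈ Finset.range (Q.natDegree + 1), Q.coeff k * f (n + k)

lemma applyOp_exp (Q : Polynomial ℂ) (r : ℂ) (n : ℕ) :
    applyOp Q (fun m => r ^ m) n = Q.eval r * r ^ n := by
  rw [applyOp, Polynomial.eval_eq_sum_range' (Nat.lt_succ_of_le le_rfl), Finset.sum_mul]
  exact Finset.sum_congr rfl fun k _ => by rw [pow_add]; ring

lemma coeff_sum_aux (Q : Polynomial ℂ) (r : ℂ) :
    ∑ k ∈ Finset.range (Q.natDegree + 1), (k : ℂ) * Q.coeff k * r ^ k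
      = Q.derivative.eval r * r := by
  have hd : (Q.derivative).natDegree < Q.natDegree + 1 :=
    Nat.lt_succ_of_le ((Polynomial.natDegree_derivative_le Q).trans (Nat.sub_le _ _))
  rw [Polynomial.eval_eq_sum_range' hd, Finset.sum_mul]
  rw [Finset.sum_range_succ']
  simp only [Polynomial.coeff_derivative]
  rw [Finset.sum_range_succ]
  have h0 : Q.coeff (Q.natDegree + 1) = 0 :=
    Polynomial.coeff_eq_zero_of_natDegree_lt (Nat.lt_succ_self _)
  rw [h0]
  simp only [Nat.cast_zero, zero_mul, add_zero, zero_mul, mul_zero]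
  exact Finset.sum_congr rfl fun k _ => by push_cast; rw [pow_succ]; ring

lemma applyOp_nexp (Q : Polynomial ℂ) (r : ℂ) (n : ℕ) :
    applyOp Q (fun m => (m : ℂ) * r ^ m) n
      = (Q.eval r * n + Q.derivative.eval r * r) * r ^ n := by
  rw [applyOp]
  have : ∀ k ∈ Finset.range (Q.natDegree + 1),
      Q.coeff k * (((n + k : ℕ) : ℂ) * r ^ (n + k))
        = (Q.coeff k * r ^ k) * (n : ℂ) * r ^ n + ((k : ℂ) * Q.coeff k * r ^ k) * r ^ n := by
    intro k _; push_cast; rw [pow_add]; ring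
  rw [Finset.sum_congr rfl this, Finset.sum_add_distrib, ← Finset.sum_mul, ← Finset.sum_mul,
    ← Finset.sum_mul, coeff_sum_aux,
    ← Polynomial.eval_eq_sum_range' (Nat.lt_succ_of_le le_rfl) r]
  ring

lemma applyOp_eq_zero (Q : Polynomial ℂ) (f : ℕ → ℂ) (hf : ∀ m, 1 ≤ m → f m = 0)
    (n : ℕ) (hn : 1 ≤ n) : applyOp Q f n = 0 :=
  Finset.sum_eq_zero fun k _ => by rw [hf (n + k) (le_add_right hn), mul_zero]

lemma seq_single (b p q : ℂ) (hb : b ≠ 0)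
    (H : ∀ n : ℕ, 1 ≤ n → (p + q * n) * b ^ n = 0) : p = 0 ∧ q = 0 := by
  have h1 := H 1 le_rfl
  have h2 := H 2 one_le_two
  norm_num at h1 h2
  have e1 : p + q = 0 := h1.resolve_right hb
  have e2 : p + q * 2 = 0 := h2.resolve_right hb
  constructor
  · linear_combination 2 * e1 - e2
  · linear_combination e2 - e1

lemma seq_double (a b p q r s : ℂ) (ha : a ≠ 0) (hb : b ≠ 0) (hab : a ≠ b)
    (H : ∀ n : ℕ, 1 ≤ n → (p + q * n) * a ^ n + (r + s * n) * b ^ n = 0) :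
    p = 0 ∧ q = 0 ∧ r = 0 ∧ s = 0 := by
  have hd : a - b ≠ 0 := sub_ne_zero.mpr hab
  have step : ∀ n : ℕ, 1 ≤ n →
      ((p * (a - b) ^ 2 + 2 * q * a * (a - b)) + (q * (a - b) ^ 2) * n) * a ^ n = 0 := by
    intro n hn
    have h0 := H n hn
    have h1 := H (n + 1) (le_add_right hn)
    have h2 := H (n + 2) (le_add_right hn)
    have ea1 : a ^ (n + 1) = a ^ n * a := pow_succ a n
    have ea2 : a ^ (n + 2) = a ^ n * a * a := by rw [pow_succ, pow_succ]
    have eb1 : b ^ (n + 1) = b ^ n * b := pow_succ b n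
    have eb2 : b ^ (n + 2) = b ^ n * b * b := by rw [pow_succ, pow_succ]
    rw [ea1, eb1] at h1
    rw [ea2, eb2] at h2
    push_cast at h0 h1 h2
    linear_combination h2 - 2 * b * h1 + b ^ 2 * h0
  obtain ⟨hP, hQ⟩ := seq_single a _ _ ha step
  have hq : q = 0 := by
    rcases mul_eq_zero.mp hQ with h | h
    · exact h
    · exact absurd h (pow_ne_zero 2 hd)
  have hP' : p * (a - b) ^ 2 = 0 := by linear_combination hP - 2 * a * (a - b) * hq
  have hp : p = 0 := by
    rcases mul_eq_zero.mp hP' with h | h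
    · exact h
    · exact absurd h (pow_ne_zero 2 hd)
  refine ⟨hp, hq, ?_, ?_⟩ <;>
  · have H' : ∀ n : ℕ, 1 ≤ n → (r + s * n) * b ^ n = 0 := by
      intro n hn
      have := H n hn
      rw [hp, hq] at this
      linear_combination this
    obtain ⟨h1, h2⟩ := seq_single b r s hb H'
    first | exact h1 | exact h2

lemma expand_applyOp {M : ℕ} (Q : Polynomial ℂ) (a b α β : ℂ) (c r : Fin M → ℂ) (n : ℕ) :
    applyOp Q (fun m => α * ((m : ℂ) * a ^ m) + β * ((m : ℂ) * b ^ m)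
        - ∑ j, c j * r j ^ m) n
      = α * ((Q.eval a * n + Q.derivative.eval a * a) * a ^ n)
        + β * ((Q.eval b * n + Q.derivative.eval b * b) * b ^ n)
        - ∑ j, c j * (Q.eval (r j) * r j ^ n) := by
  rw [← applyOp_nexp Q a n, ← applyOp_nexp Q b n]
  have hterm : ∀ j : Fin M, c j * (Q.eval (r j) * r j ^ n)
      = applyOp Q (fun m => c j * r j ^ m) n := by
    intro j
    rw [← applyOp_exp Q (r j) n]
    simp only [applyOp, Finset.mul_sum]
    exact Finset.sum_congr rfl fun k _ => by ring
  simp only [hterm]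
  simp only [applyOp, mul_sub, mul_add, Finset.sum_sub_distrib, Finset.sum_add_distrib,
    Finset.mul_sum]
  rw [Finset.sum_comm]
  congr 1
  congr 1 <;> exact Finset.sum_congr rfl fun k _ => by ring

lemma key_seq (M : ℕ) (a b α β : ℂ) (c r : Fin M → ℂ)
    (H : ∀ n : ℕ, 1 ≤ n → α * n * a ^ n + β * n * b ^ n = ∑ j, c j * r j ^ n) :
    α * a + β * b = 0 := by
  classical
  set T : Finset ℂ := Finset.image r Finset.univ with hT
  set Q : Polynomial ℂ := ∏ t ∈ T, (X - C t) with hQ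
  have hQroot : ∀ j, Q.eval (r j) = 0 := by
    intro j
    rw [hQ, Polynomial.eval_prod]
    exact Finset.prod_eq_zero (Finset.mem_image_of_mem r (Finset.mem_univ j)) (by simp)
  have hQne : ∀ x : ℂ, x ∉ T → Q.eval x ≠ 0 := by
    intro x hx
    rw [hQ, Polynomial.eval_prod]
    refine Finset.prod_ne_zero_iff.mpr fun t ht => ?_
    simp only [Polynomial.eval_sub, Polynomial.eval_X, Polynomial.eval_C, sub_ne_zero]
    rintro rfl
    exact hx ht
  have hQder : ∀ x : ℂ, x ∈ T → Q.derivative.eval x ≠ 0 := by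
    intro x hx
    have hxval : x ∈ T.val := hx
    have heq : Q.derivative.eval x
        = (Multiset.map (fun a => x - a) (T.val.erase x)).prod := by
      rw [hQ, Finset.prod_eq_multiset_prod]
      exact Polynomial.eval_multiset_prod_X_sub_C_derivative hxval
    rw [heq]
    intro h0
    rcases Multiset.prod_eq_zero_iff.mp h0 with hmem
    rcases Multiset.mem_map.mp hmem with ⟨t, ht, hteq⟩
    have : t = x := by linear_combination -hteq
    rw [this] at ht
    exact (Multiset.Nodup.notMem_erase T.nodup) ht
  have vanish : ∀ γ x : ℂ, x ≠ 0 → γ * Q.eval x = 0 → γ * (Q.derivative.eval x * x) = 0 →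
      γ = 0 := by
    intro γ x hx h1 h2
    by_cases hmem : x ∈ T
    · rcases mul_eq_zero.mp h2 with h | h
      · exact h
      · exact absurd h (mul_ne_zero (hQder x hmem) hx)
    · rcases mul_eq_zero.mp h1 with h | h
      · exact h
      · exact absurd h (hQne x hmem)
  have star : ∀ n : ℕ, 1 ≤ n →
      (α * (Q.derivative.eval a * a) + (α * Q.eval a) * n) * a ^ n
        + (β * (Q.derivative.eval b * b) + (β * Q.eval b) * n) * b ^ n = 0 := by
    intro n hn
    have h0 : applyOp Q (fun m => α * ((m : ℂ) * a ^ m) + β * ((m : ℂ) * b ^ m)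
        - ∑ j, c j * r j ^ m) n = 0 := by
      apply applyOp_eq_zero
      · intro m hm
        have := H m hm
        linear_combination this
      · exact hn
    rw [expand_applyOp] at h0
    simp only [hQroot, zero_mul, mul_zero, Finset.sum_const_zero, sub_zero] at h0
    linear_combination h0
  by_cases ha : a = 0
  · by_cases hb : b = 0
    · rw [ha, hb]; ring
    · have H' : ∀ n : ℕ, 1 ≤ n →
          (β * (Q.derivative.eval b * b) + (β * Q.eval b) * n) * b ^ n = 0 := by
        intro n hn
        have := star n hn
        rw [ha, zero_pow (by omega : n ≠ 0)] at this
        linear_combination this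
      obtain ⟨h1, h2⟩ := seq_single b _ _ hb H'
      have hβ : β = 0 := vanish β b hb (by linear_combination h2) (by linear_combination h1)
      rw [ha, hβ]; ring
  · by_cases hb : b = 0
    · have H' : ∀ n : ℕ, 1 ≤ n →
          (α * (Q.derivative.eval a * a) + (α * Q.eval a) * n) * a ^ n = 0 := by
        intro n hn
        have := star n hn
        rw [hb, zero_pow (by omega : n ≠ 0)] at this
        linear_combination this
      obtain ⟨h1, h2⟩ := seq_single a _ _ ha H'
      have hα : α = 0 := vanish α a ha (by linear_combination h2) (by linear_combination h1)
      rw [hb, hα]; ring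
    · by_cases hab : a = b
      · have H' : ∀ n : ℕ, 1 ≤ n →
            ((α + β) * (Q.derivative.eval a * a) + ((α + β) * Q.eval a) * n) * a ^ n = 0 := by
          intro n hn
          have := star n hn
          rw [← hab] at this
          linear_combination this
        obtain ⟨h1, h2⟩ := seq_single a _ _ ha H'
        have hs : α + β = 0 := vanish (α + β) a ha (by linear_combination h2)
          (by linear_combination h1)
        rw [← hab]; linear_combination a * hs
      · obtain ⟨h1, h2, h3, h4⟩ := seq_double a b _ _ _ _ ha hb hab star
        have hα : α = 0 := vanish α a ha (by linear_combination h2) (by linear_combination h1)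
        have hβ : β = 0 := vanish β b hb (by linear_combination h4) (by linear_combination h3)
        rw [hα, hβ]; ring

/-- `pwAux x n = x ^ (n + 1)` for a semigroup. -/
def pwAux {S : Type*} [Semigroup S] (x : S) : ℕ → S
  | 0 => x
  | n + 1 => pwAux x n * x

lemma mult_pwAux {S : Type*} [Semigroup S] {χ : S → ℂ} (hχ : IsMultiplicativeFn χ) (x : S) :
    ∀ n : ℕ, χ (pwAux x n) = χ x ^ (n + 1) := by
  intro n
  induction n with
  | zero => simp [pwAux]
  | succ k ih => rw [pwAux, hχ, ih]; ring

lemma add_pwAux {S : Type*} [Semigroup S] {A : S → ℂ} (hA : IsAdditiveFn A) (x : S) :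
    ∀ n : ℕ, A (pwAux x n) = ((n : ℂ) + 1) * A x := by
  intro n
  induction n with
  | zero => simp [pwAux]
  | succ k ih => rw [pwAux, hA, ih]; push_cast; ring

end StmtTwoAux

/-- If `μ₁ A₁ + μ₂ A₂` equals a linear combination of
multiplicative functions, then `μ₁ A₁ + μ₂ A₂ = 0`. -/
theorem stmt2 [Semigroup S] (M : ℕ)
    (μ₁ μ₂ : S → ℂ) (A₁ A₂ : S → ℂ)
    (c : Fin M → ℂ) (χ : Fin M → S → ℂ)
    (hμ₁ : IsMultiplicativeFn μ₁) (hμ₂ : IsMultiplicativeFn μ₂)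
    (hA₁ : IsAdditiveFn A₁) (hA₂ : IsAdditiveFn A₂)
    (hχ : ∀ j, IsMultiplicativeFn (χ j))
    (h : ∀ x : S, μ₁ x * A₁ x + μ₂ x * A₂ x = ∑ j, c j * χ j x) :
    ∀ x : S, μ₁ x * A₁ x + μ₂ x * A₂ x = 0 := by
  intro x
  have H : ∀ n : ℕ, 1 ≤ n → A₁ x * n * μ₁ x ^ n + A₂ x * n * μ₂ x ^ n
      = ∑ j, c j * χ j x ^ n := by
    intro n hn
    obtain ⟨k, rfl⟩ : ∃ k, n = k + 1 := ⟨n - 1, by omega⟩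
    have hx := h (pwAux x k)
    rw [mult_pwAux hμ₁ x k, mult_pwAux hμ₂ x k, add_pwAux hA₁ x k, add_pwAux hA₂ x k] at hx
    have hxr : ∀ j : Fin M, χ j (pwAux x k) = χ j x ^ (k + 1) :=
      fun j => mult_pwAux (hχ j) x k
    simp only [hxr] at hx
    push_cast
    linear_combination hx
  have := key_seq M (μ₁ x) (μ₂ x) (A₁ x) (A₂ x) c (fun j => χ j x) H
  linear_combination this
end

section
/- Let S be a semigroup, μ a nonzero multiplicative function on S, A an additive function on S∖I_μ, and T a subsemigroup of S. If Ψ_μ(A)(x) = Σ_{j=1}^N c_j χ_j(x) for all x ∈ T, where c_j ∈ ℂ and χ₁,…,χ_N are multiplicative functions on T, then Ψ_μ(A)(x) = 0 for all x ∈ T. -/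
open scoped BigOperators

variable {S : Type*}

/-
Proof idea: if `μ x ≠ 0`, then along the powers `x ^ (n + 1)` the left-hand side is
`(n + 1) μ(x)^(n+1) A(x)` while the right-hand side is a linear combination of the geometric
sequences `χ_j(x)^(n+1)`. Such a combination cannot contain a secular term `n m^n b` with
`m ≠ 0` unless `b = 0`: applying the difference operator `E - r` for each ratio `r ≠ m` kills
the corresponding geometric term and multiplies `b` by `m - r ≠ 0`.
-/

theorem eq_zero_of_sum_mul_pow_eq {K ι : Type*} [CommRing K] [IsDomain K] {m : K} (hm : m ≠ 0)
    (r : ι → K) (s : Finset ι) :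
    ∀ {c : ι → K} {b d : K}, (∀ n : ℕ, ∑ i ∈ s, c i * r i ^ n = (n * b + d) * m ^ n) → b = 0 := by
  classical
  induction s using Finset.induction_on with
  | empty =>
    intro c b d h
    have hd : d = 0 := by simpa using (h 0).symm
    have hbm : b * m = 0 := by simpa [hd] using (h 1).symm
    exact (mul_eq_zero.mp hbm).resolve_right hm
  | @insert a s ha ih =>
    intro c b d h
    simp only [Finset.sum_insert ha] at h
    by_cases hra : r a = m
    · exact ih (d := d - c a) fun n => by rw [← hra] at h ⊢; linear_combination h n
    · have hdiff : ∀ n : ℕ, ∑ i ∈ s, (c i * (r i - r a)) * r i ^ n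
          = (n * (b * (m - r a)) + (b * m + d * (m - r a))) * m ^ n := by
        intro n
        have hsum : ∑ i ∈ s, (c i * (r i - r a)) * r i ^ n
            = ∑ i ∈ s, c i * r i ^ (n + 1) - r a * ∑ i ∈ s, c i * r i ^ n := by
          rw [Finset.mul_sum, ← Finset.sum_sub_distrib]
          exact Finset.sum_congr rfl fun i _ => by ring
        rw [hsum]
        have hnext := h (n + 1)
        push_cast at hnext
        linear_combination hnext - r a * h n
      have hb : b * (m - r a) = 0 := ih hdiff
      exact (mul_eq_zero.mp hb).resolve_right (sub_ne_zero.mpr (Ne.symm hra))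

/-- `powSucc x n = x ^ (n + 1)`: a semigroup has no `x ^ 0`. -/
def powSucc [Semigroup S] (x : S) : ℕ → S
  | 0 => x
  | n + 1 => powSucc x n * x

section powSucc

variable [Semigroup S] {U : Subsemigroup S} {x : S}

theorem Subsemigroup.powSucc_mem (hx : x ∈ U) (n : ℕ) : powSucc x n ∈ U := by
  induction n with
  | zero => exact hx
  | succ n ih => exact U.mul_mem ih hx

theorem IsMultiplicativeOnSet.map_powSucc {χ : S → ℂ} (hχ : IsMultiplicativeOnSet χ U)
    (hx : x ∈ U) (n : ℕ) : χ (powSucc x n) = χ x ^ (n + 1) := by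
  induction n with
  | zero => simp [powSucc]
  | succ n ih => rw [powSucc, hχ _ (U.powSucc_mem hx n) _ hx, ih, ← pow_succ]

theorem IsAdditiveOnSet.map_powSucc {a : S → ℂ} (ha : IsAdditiveOnSet a U)
    (hx : x ∈ U) (n : ℕ) : a (powSucc x n) = (n + 1) * a x := by
  induction n with
  | zero => simp [powSucc]
  | succ n ih => rw [powSucc, ha _ (U.powSucc_mem hx n) _ hx, ih]; push_cast; ring

end powSucc

theorem IsMultiplicativeFn.isMultiplicativeOnSet [Semigroup S] {μ : S → ℂ}
    (hμ : IsMultiplicativeFn μ) (U : Set S) : IsMultiplicativeOnSet μ U :=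
  fun x _ y _ => hμ x y

/-- The subsemigroup `S ∖ I_μ`. -/
def IsMultiplicativeFn.support [Semigroup S] {μ : S → ℂ} (hμ : IsMultiplicativeFn μ) :
    Subsemigroup S where
  carrier := {x | μ x ≠ 0}
  mul_mem' {x y} hx hy := by simp only [Set.mem_ofPred_eq, hμ x y]; exact mul_ne_zero hx hy

theorem psiFn_powSucc [Semigroup S] {μ A : S → ℂ} (hμ : IsMultiplicativeFn μ)
    (hA : IsAdditiveOnSet A {x : S | μ x ≠ 0}) {x : S} (hx : μ x ≠ 0) (n : ℕ) :
    PsiFn μ A (powSucc x n) = ((n : ℂ) + 1) * μ x ^ (n + 1) * A x := by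
  have hxU : x ∈ hμ.support := hx
  have hμx : μ (powSucc x n) = μ x ^ (n + 1) :=
    (hμ.isMultiplicativeOnSet _).map_powSucc hxU n
  rw [PsiFn, if_neg (hμx ▸ pow_ne_zero _ hx), hμx,
    IsAdditiveOnSet.map_powSucc (U := hμ.support) hA hxU n]
  ring

theorem stmt4_general [Semigroup S] (μ : S → ℂ)
    (hμ : IsMultiplicativeFn μ)
    (A : S → ℂ) (hA : IsAdditiveOnSet A {x : S | μ x ≠ 0})
    (T : Subsemigroup S) (N : ℕ) (c : Fin N → ℂ) (χ : Fin N → S → ℂ)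
    (hχ : ∀ j, IsMultiplicativeOnSet (χ j) (T : Set S))
    (h : ∀ x ∈ T, PsiFn μ A x = ∑ j, c j * χ j x) :
    ∀ x ∈ T, PsiFn μ A x = 0 := by
  intro x hx
  by_cases hx0 : μ x = 0
  · simp [PsiFn, hx0]
  have hpow : ∀ n : ℕ, ∑ j, (c j * χ j x) * χ j x ^ n
      = (n * (μ x * A x) + μ x * A x) * μ x ^ n := by
    intro n
    calc ∑ j, (c j * χ j x) * χ j x ^ n = ∑ j, c j * χ j (powSucc x n) := by
          simp only [(hχ _).map_powSucc hx, pow_succ']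
          exact Finset.sum_congr rfl fun j _ => by ring
      _ = PsiFn μ A (powSucc x n) := (h _ (T.powSucc_mem hx n)).symm
      _ = (n * (μ x * A x) + μ x * A x) * μ x ^ n := by rw [psiFn_powSucc hμ hA hx0]; ring
  rw [PsiFn, if_neg hx0]
  exact eq_zero_of_sum_mul_pow_eq hx0 _ _ hpow

/-- If `Ψ_μ(A)` agrees on a subsemigroup `T` with a linear
combination of multiplicative functions on `T`, then `Ψ_μ(A) = 0` on `T`. -/
theorem stmt4 [Semigroup S] (μ : S → ℂ)
    (hμ : IsMultiplicativeFn μ) (hμ0 : μ ≠ 0)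
    (A : S → ℂ) (hA : IsAdditiveOnSet A {x : S | μ x ≠ 0})
    (T : Subsemigroup S) (N : ℕ) (c : Fin N → ℂ) (χ : Fin N → S → ℂ)
    (hχ : ∀ j, IsMultiplicativeOnSet (χ j) (T : Set S))
    (h : ∀ x ∈ T, PsiFn μ A x = ∑ j, c j * χ j x) :
    ∀ x ∈ T, PsiFn μ A x = 0 :=
  stmt4_general μ hμ A hA T N c χ hχ h
end

section
/- Let S be a semigroup, μ₁,μ₂ nonzero multiplicative functions on S with μ₁ ≠ μ₂, A₁ an additive function on S∖I_{μ₁}, and A₂ an additive function on S∖I_{μ₂}. If Ψ_{μ₁}(A₁)(x) + Ψ_{μ₂}(A₂)(x) = Σ_{j=1}^N c_j χ_j(x) for all x ∈ S, where c_j ∈ ℂ and χ₁,…,χ_N are multiplicative functions on S, then Ψ_{μ₁}(A₁)(x) + Ψ_{μ₂}(A₂)(x) = 0 for all x ∈ S. -/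
open scoped BigOperators

variable {S : Type*}

/-!
A function `Ψ = Ψ_μ(A)` satisfies `Ψ(xy) = μ(x)Ψ(y) + μ(y)Ψ(x)`. Let `V` be the span of the
multiplicative functions; it is stable under right translations `f ↦ f(· y)`. Translating
`Ψ₁ + Ψ₂ ∈ V` by a point `y` with `μ₁(y) ≠ μ₂(y)` and subtracting `μ₂(y)(Ψ₁ + Ψ₂)` shows that
`Ψ₁` and `Ψ₂` lie in `V` separately. Finally, if `Ψ ∈ V` satisfies the equation above for a nonzero
multiplicative `μ`, the operator `f ↦ f(· y) - μ(y) f` maps `V` into the span of the nonzero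
multiplicative functions other than `μ`, but sends `Ψ` to `Ψ(y) μ`; by Dedekind's independence of
characters, `Ψ(y) = 0`.
-/
section

variable [Semigroup S]

def IsTwistedDerivation (μ Ψ : S → ℂ) : Prop :=
  ∀ x y, Ψ (x * y) = μ x * Ψ y + μ y * Ψ x

theorem isTwistedDerivation_psiFn {μ A : S → ℂ} (hμ : IsMultiplicativeFn μ)
    (hA : IsAdditiveOnSet A {x : S | μ x ≠ 0}) : IsTwistedDerivation μ (PsiFn μ A) := by
  intro x y
  simp only [PsiFn, hμ x y, mul_eq_zero]
  by_cases hx : μ x = 0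
  · simp [hx]
  by_cases hy : μ y = 0
  · simp [hy]
  simp only [hx, hy, or_self, if_false, hA x hx y hy]
  ring

/-- Dedekind's lemma for semigroups, reduced to the monoid case through `WithOne S`: the relation
`∑ gᵢ χᵢ = 0` on `S` yields the relation `∑ gᵢ χᵢ(s) χᵢ = 0` on `WithOne S` for every `s`. -/
theorem linearIndepOn_isMultiplicativeFn :
    LinearIndepOn ℂ id {χ : S → ℂ | IsMultiplicativeFn χ ∧ χ ≠ 0} := by
  set M := {χ : S → ℂ | IsMultiplicativeFn χ ∧ χ ≠ 0}
  let extend : M → (WithOne S →* ℂ) := fun χ => WithOne.lift ⟨χ.1, χ.2.1⟩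
  have extend_coe (χ : M) (x : S) : extend χ x = χ.1 x := WithOne.lift_coe _ x
  have hinj : Function.Injective extend := fun χ ρ h =>
    Subtype.ext <| funext fun x => by rw [← extend_coe, ← extend_coe, h]
  have hext := (linearIndependent_monoidHom (WithOne S) ℂ).comp extend hinj
  rw [linearIndependent_iff'] at hext
  refine linearIndependent_iff'.mpr ?_
  intro s g hg χ hχ
  obtain ⟨s₀, hs₀⟩ := Function.ne_iff.mp χ.2.2
  have hrel : ∑ i ∈ s, (g i * i.1 s₀) • ⇑(extend i) = 0 := by
    funext w
    cases w with
    | one => simpa [WithOne.lift_one] using congrFun hg s₀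
    | coe x =>
      have key := congrFun hg (s₀ * x)
      simp only [Finset.sum_apply, Pi.smul_apply, smul_eq_mul, id, Pi.zero_apply] at key
      simp only [Finset.sum_apply, Pi.smul_apply, smul_eq_mul, extend_coe, Pi.zero_apply, ← key]
      exact Finset.sum_congr rfl fun i _ => by rw [i.2.1 s₀ x, mul_assoc]
  exact (mul_eq_zero.mp (hext s _ hrel χ hχ)).resolve_right hs₀

theorem comp_mul_right_mem_span {f : S → ℂ} (y : S)
    (hf : f ∈ Submodule.span ℂ {χ : S → ℂ | IsMultiplicativeFn χ}) :
    (fun x => f (x * y)) ∈ Submodule.span ℂ {χ : S → ℂ | IsMultiplicativeFn χ} := by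
  refine (Submodule.span_le (p := (Submodule.span ℂ _).comap (LinearMap.funLeft ℂ ℂ (· * y)))).mpr
    (fun χ hχ => ?_) hf
  have : LinearMap.funLeft ℂ ℂ (· * y) χ = χ y • χ := by
    funext x; simp [LinearMap.funLeft_apply, hχ x y, mul_comm]
  simpa [this] using Submodule.smul_mem _ _ (Submodule.subset_span hχ)

theorem IsTwistedDerivation.eq_zero_of_mem_span {μ Ψ : S → ℂ} (hΨ : IsTwistedDerivation μ Ψ)
    (hμ : IsMultiplicativeFn μ) (hμ0 : μ ≠ 0)
    (hspan : Ψ ∈ Submodule.span ℂ {χ : S → ℂ | IsMultiplicativeFn χ}) : Ψ = 0 := by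
  set M := {χ : S → ℂ | IsMultiplicativeFn χ ∧ χ ≠ 0}
  funext y
  let L := LinearMap.funLeft ℂ ℂ (· * y) - μ y • LinearMap.id
  have hL : Submodule.span ℂ {χ : S → ℂ | IsMultiplicativeFn χ} ≤
      (Submodule.span ℂ (M \ {μ})).comap L := by
    refine Submodule.span_le.mpr fun χ hχ => ?_
    have hLχ : L χ = (χ y - μ y) • χ := by
      funext x
      simp only [LinearMap.sub_apply, LinearMap.smul_apply, LinearMap.id_coe, id_eq, Pi.sub_apply,
        LinearMap.funLeft_apply, hχ x y, Pi.smul_apply, smul_eq_mul, L]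
      ring
    rw [SetLike.mem_coe, Submodule.mem_comap, hLχ]
    by_cases hχμ : χ = μ
    · simp [hχμ]
    by_cases hχ0 : χ = 0
    · simp [hχ0]
    exact Submodule.smul_mem _ _ (Submodule.subset_span ⟨⟨hχ, hχ0⟩, hχμ⟩)
  have hLΨ : L Ψ = Ψ y • μ := by
    funext x
    simp only [L, LinearMap.sub_apply, LinearMap.smul_apply, LinearMap.id_apply, Pi.sub_apply,
      LinearMap.funLeft_apply, hΨ x y, Pi.smul_apply, smul_eq_mul, add_sub_cancel_right]
    ring
  have hmem : Ψ y • μ ∈ Submodule.span ℂ (M \ {μ}) := hLΨ ▸ hL hspan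
  have hnotMem : μ ∉ Submodule.span ℂ (M \ {μ}) := by
    refine ((linearIndepOn_isMultiplicativeFn.mono Set.sdiff_subset).notMem_span_iff_id).mpr
      ⟨?_, fun h => h.2 rfl⟩
    rw [Set.insert_sdiff_singleton, Set.insert_eq_of_mem (show μ ∈ M from ⟨hμ, hμ0⟩)]
    exact linearIndepOn_isMultiplicativeFn
  by_contra hy
  exact hnotMem ((Submodule.smul_mem_iff _ hy).mp hmem)

theorem IsTwistedDerivation.mem_span_of_add_mem_span {μ₁ μ₂ Ψ₁ Ψ₂ : S → ℂ}
    (hΨ₁ : IsTwistedDerivation μ₁ Ψ₁) (hΨ₂ : IsTwistedDerivation μ₂ Ψ₂)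
    (hμ₁ : IsMultiplicativeFn μ₁) (hμ₂ : IsMultiplicativeFn μ₂) (hne : μ₁ ≠ μ₂)
    (hsum : Ψ₁ + Ψ₂ ∈ Submodule.span ℂ {χ : S → ℂ | IsMultiplicativeFn χ}) :
    Ψ₁ ∈ Submodule.span ℂ {χ : S → ℂ | IsMultiplicativeFn χ} := by
  obtain ⟨y, hy⟩ := Function.ne_iff.mp hne
  have hsplit : (μ₁ y - μ₂ y) • Ψ₁ = (fun x => (Ψ₁ + Ψ₂) (x * y)) - μ₂ y • (Ψ₁ + Ψ₂)
      - Ψ₁ y • μ₁ - Ψ₂ y • μ₂ := by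
    funext x
    simp only [Pi.sub_apply, Pi.add_apply, Pi.smul_apply, smul_eq_mul, hΨ₁ x y, hΨ₂ x y]
    ring
  rw [← Submodule.smul_mem_iff _ (sub_ne_zero.mpr hy), hsplit]
  refine Submodule.sub_mem _ (Submodule.sub_mem _ (Submodule.sub_mem _ ?_ ?_) ?_) ?_
  · exact comp_mul_right_mem_span y hsum
  · exact Submodule.smul_mem _ _ hsum
  · exact Submodule.smul_mem _ _ (Submodule.subset_span hμ₁)
  · exact Submodule.smul_mem _ _ (Submodule.subset_span hμ₂)

end

/-- If `Ψ_{μ₁}(A₁) + Ψ_{μ₂}(A₂)` equals a linear combination of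
multiplicative functions on `S`, with `μ₁ ≠ μ₂` nonzero multiplicative, then
`Ψ_{μ₁}(A₁) + Ψ_{μ₂}(A₂) = 0`. -/
theorem stmt5 [Semigroup S] (μ₁ μ₂ : S → ℂ)
    (hμ₁ : IsMultiplicativeFn μ₁) (hμ₁0 : μ₁ ≠ 0)
    (hμ₂ : IsMultiplicativeFn μ₂) (hμ₂0 : μ₂ ≠ 0) (hne : μ₁ ≠ μ₂)
    (A₁ A₂ : S → ℂ)
    (hA₁ : IsAdditiveOnSet A₁ {x : S | μ₁ x ≠ 0})
    (hA₂ : IsAdditiveOnSet A₂ {x : S | μ₂ x ≠ 0})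
    (N : ℕ) (c : Fin N → ℂ) (χ : Fin N → S → ℂ)
    (hχ : ∀ j, IsMultiplicativeFn (χ j))
    (h : ∀ x : S, PsiFn μ₁ A₁ x + PsiFn μ₂ A₂ x = ∑ j, c j * χ j x) :
    ∀ x : S, PsiFn μ₁ A₁ x + PsiFn μ₂ A₂ x = 0 := by
  set V := Submodule.span ℂ {χ : S → ℂ | IsMultiplicativeFn χ}
  have hΨ₁ := isTwistedDerivation_psiFn hμ₁ hA₁
  have hΨ₂ := isTwistedDerivation_psiFn hμ₂ hA₂
  have hsum : PsiFn μ₁ A₁ + PsiFn μ₂ A₂ ∈ V := by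
    rw [show PsiFn μ₁ A₁ + PsiFn μ₂ A₂ = ∑ j, c j • χ j from funext fun x => by simp [h x]]
    exact Submodule.sum_mem _ fun j _ => Submodule.smul_mem _ _ (Submodule.subset_span (hχ j))
  have hmem₁ := hΨ₁.mem_span_of_add_mem_span hΨ₂ hμ₁ hμ₂ hne hsum
  have hmem₂ : PsiFn μ₂ A₂ ∈ V := by simpa using Submodule.sub_mem _ hsum hmem₁
  intro x
  rw [hΨ₁.eq_zero_of_mem_span hμ₁ hμ₁0 hmem₁, hΨ₂.eq_zero_of_mem_span hμ₂ hμ₂0 hmem₂]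
  simp
end

section
/- Let S be a semigroup, μ a nonzero multiplicative function on S, T a subsemigroup of S with (S∖I_μ) ∩ T ≠ ∅, and a, a₁ additive functions on S∖I_μ. If Ψ_μ(a₁ + a²)(x) = Σ_{j=1}^N c_j χ_j(x) for all x ∈ (S∖I_μ) ∩ T, where c_j ∈ ℂ and χ₁,…,χ_N are multiplicative functions on S, then a₁(x) = 0 and a(x) = 0 for all x ∈ (S∖I_μ) ∩ T. (Here a² denotes the pointwise square x ↦ a(x)².) -/
open scoped BigOperators

variable {S : Type*}

section Aux
open Polynomial

/-- Difference operator `p ↦ p(X+1) - r·p`. -/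
noncomputable def Dop (r : ℂ) (p : Polynomial ℂ) : Polynomial ℂ :=
  p.comp (X + 1) - C r * p

lemma Dop_eval (r : ℂ) (p : Polynomial ℂ) (z : ℂ) :
    (Dop r p).eval z = p.eval (z + 1) - r * p.eval z := by
  simp [Dop]

lemma Dop_eq_zero {r : ℂ} (hr : r ≠ 1) {p : Polynomial ℂ}
    (h : Dop r p = 0) : p = 0 := by
  by_contra hp
  have hX1 : (X + 1 : Polynomial ℂ).natDegree = 1 := by
    simpa using natDegree_X_add_C (1 : ℂ)
  have hlc : (X + 1 : Polynomial ℂ).leadingCoeff = 1 := by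
    simpa using leadingCoeff_X_add_C (1 : ℂ)
  have hd : (p.comp (X + 1)).natDegree = p.natDegree := by
    rw [natDegree_comp, hX1, mul_one]
  have hcoeff : (p.comp (X + 1)).coeff p.natDegree = p.leadingCoeff := by
    have := leadingCoeff_comp (p := p) (q := X + 1) (by rw [hX1]; norm_num)
    rw [hlc, one_pow, mul_one] at this
    conv_lhs => rw [← hd]
    rw [coeff_natDegree, this]
  have : (Dop r p).coeff p.natDegree = (1 - r) * p.leadingCoeff := by
    simp [Dop, hcoeff, coeff_natDegree]; ring
  rw [h] at this
  simp at this
  rcases this with h1 | h2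
  · exact hr (by linear_combination -h1)
  · exact hp h2

lemma lemG {ι : Type*} [DecidableEq ι] (J : Finset ι) :
    ∀ (c r : ι → ℂ) (p : Polynomial ℂ),
    (∀ j ∈ J, r j ≠ 1) →
    (∀ n : ℕ, 1 ≤ n → p.eval (n : ℂ) = ∑ j ∈ J, c j * r j ^ n) → p = 0 := by
  induction J using Finset.induction_on with
  | empty =>
    intro c r p _ h
    apply Polynomial.eq_zero_of_infinite_isRoot
    apply Set.infinite_of_injective_forall_mem
      (f := fun n : ℕ => ((n + 1 : ℕ) : ℂ)) ?_ ?_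
    · intro m n hmn
      have := Nat.cast_injective (R := ℂ) hmn
      omega
    · intro n
      have := h (n + 1) (by omega)
      simpa [IsRoot] using this
  | @insert j s hj ih =>
    intro c r p hr h
    have hq : ∀ n : ℕ, 1 ≤ n →
        (Dop (r j) p).eval (n : ℂ) = ∑ i ∈ s, (c i * (r i - r j)) * r i ^ n := by
      intro n hn
      rw [Dop_eval]
      have h1 := h n hn
      have h2 := h (n + 1) (by omega)
      push_cast at h2
      rw [h1, h2, Finset.mul_sum, ← Finset.sum_sub_distrib]
      have key : ∀ i ∈ insert j s,
          c i * r i ^ (n + 1) - r j * (c i * r i ^ n)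
            = (c i * (r i - r j)) * r i ^ n := by
        intro i _; ring
      rw [Finset.sum_congr rfl key, Finset.sum_insert hj]
      simp
    have hzero := ih (fun i => c i * (r i - r j)) r (Dop (r j) p)
      (fun i hi => hr i (Finset.mem_insert_of_mem hi)) hq
    exact Dop_eq_zero (hr j (Finset.mem_insert_self j s)) hzero

lemma lemL (A B : ℂ) (N : ℕ) (c r : Fin N → ℂ)
    (h : ∀ n : ℕ, 1 ≤ n → (n : ℂ) * A + (n : ℂ) ^ 2 * B = ∑ j, c j * r j ^ n) :
    A = 0 ∧ B = 0 := by
  classical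
  set J : Finset (Fin N) := Finset.univ.filter (fun j => r j ≠ 1) with hJ
  set Cc : ℂ := ∑ j ∈ Finset.univ.filter (fun j => r j = 1), c j with hCc
  set p : Polynomial ℂ := C A * X + C B * X ^ 2 - C Cc with hp
  have hpz : p = 0 := by
    apply lemG J c r p (fun j hj => (Finset.mem_filter.mp hj).2)
    intro n hn
    have h1 := h n hn
    have hsplit : (∑ j, c j * r j ^ n)
        = (∑ j ∈ Finset.univ.filter (fun j => r j = 1), c j * r j ^ n)
          + ∑ j ∈ J, c j * r j ^ n := by
      rw [hJ, Finset.sum_filter_add_sum_filter_not]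
    have hone : (∑ j ∈ Finset.univ.filter (fun j => r j = 1), c j * r j ^ n) = Cc := by
      rw [hCc]
      apply Finset.sum_congr rfl
      intro j hj
      rw [(Finset.mem_filter.mp hj).2, one_pow, mul_one]
    rw [hsplit, hone] at h1
    simp only [hp, eval_sub, eval_add, eval_mul, eval_pow, eval_C, eval_X]
    linear_combination h1
  constructor
  · have := congrArg (fun q => Polynomial.coeff q 1) hpz
    simpa [hp, coeff_X, coeff_C] using this
  · have := congrArg (fun q => Polynomial.coeff q 2) hpz
    simpa [hp, coeff_X, coeff_C, coeff_X_pow] using this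

end Aux

/-- `pw x n = x^(n+1)`. -/
def pw [Semigroup S] (x : S) : ℕ → S
  | 0 => x
  | n + 1 => pw x n * x

/-- If `Ψ_μ(a₁ + a²)` agrees on `(S∖I_μ) ∩ T` with a linear
combination of multiplicative functions on `S`, then `a₁ = 0` and `a = 0` on
`(S∖I_μ) ∩ T`. -/
theorem stmt6 [Semigroup S] (μ : S → ℂ)
    (hμ : IsMultiplicativeFn μ) (hμ0 : μ ≠ 0)
    (T : Subsemigroup S) (hTne : ({x : S | μ x ≠ 0} ∩ (T : Set S)).Nonempty)
    (a a₁ : S → ℂ)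
    (ha : IsAdditiveOnSet a {x : S | μ x ≠ 0})
    (ha₁ : IsAdditiveOnSet a₁ {x : S | μ x ≠ 0})
    (N : ℕ) (c : Fin N → ℂ) (χ : Fin N → S → ℂ)
    (hχ : ∀ j, IsMultiplicativeFn (χ j))
    (h : ∀ x ∈ {x : S | μ x ≠ 0} ∩ (T : Set S),
      PsiFn μ (fun t => a₁ t + (a t) ^ 2) x = ∑ j, c j * χ j x) :
    ∀ x ∈ {x : S | μ x ≠ 0} ∩ (T : Set S), a₁ x = 0 ∧ a x = 0 := by
  rintro x ⟨hxμ, hxT⟩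
  simp only [Set.mem_setOf_eq] at hxμ
  -- facts about powers
  have hpwμ : ∀ n, μ (pw x n) = μ x ^ (n + 1) := by
    intro n; induction n with
    | zero => simp [pw]
    | succ k ih => rw [pw, hμ, ih]; ring
  have hpwμ0 : ∀ n, μ (pw x n) ≠ 0 := by
    intro n; rw [hpwμ]; exact pow_ne_zero _ hxμ
  have hpwT : ∀ n, pw x n ∈ T := by
    intro n; induction n with
    | zero => exact hxT
    | succ k ih => exact T.mul_mem ih hxT
  have hpwχ : ∀ j n, χ j (pw x n) = χ j x ^ (n + 1) := by
    intro j n; induction n with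
    | zero => simp [pw]
    | succ k ih => rw [pw, hχ j, ih]; ring
  have hpwa : ∀ n, a (pw x n) = (n + 1 : ℕ) * a x := by
    intro n; induction n with
    | zero => simp [pw]
    | succ k ih =>
      rw [pw, ha _ (hpwμ0 k) _ hxμ, ih]
      push_cast; ring
  have hpwa₁ : ∀ n, a₁ (pw x n) = (n + 1 : ℕ) * a₁ x := by
    intro n; induction n with
    | zero => simp [pw]
    | succ k ih =>
      rw [pw, ha₁ _ (hpwμ0 k) _ hxμ, ih]
      push_cast; ring
  -- main sequence identity
  have key : ∀ m : ℕ, 1 ≤ m →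
      (m : ℂ) * a₁ x + (m : ℂ) ^ 2 * (a x ^ 2)
        = ∑ j, c j * (χ j x / μ x) ^ m := by
    intro m hm
    obtain ⟨n, rfl⟩ : ∃ n, m = n + 1 := ⟨m - 1, by omega⟩
    have hx := h (pw x n) ⟨hpwμ0 n, hpwT n⟩
    rw [PsiFn] at hx
    rw [if_neg (hpwμ0 n), hpwμ, hpwa, hpwa₁] at hx
    have hx2 : (μ x ^ (n + 1)) *
        ((↑(n + 1) : ℂ) * a₁ x + (↑(n + 1) : ℂ) ^ 2 * a x ^ 2)
        = ∑ j, c j * χ j x ^ (n + 1) := by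
      simp only [hpwχ] at hx
      linear_combination hx
    have hne : (μ x : ℂ) ^ (n + 1) ≠ 0 := pow_ne_zero _ hxμ
    have goal2 : (↑(n + 1) : ℂ) * a₁ x + (↑(n + 1) : ℂ) ^ 2 * a x ^ 2
        = (∑ j, c j * χ j x ^ (n + 1)) / μ x ^ (n + 1) := by
      rw [eq_div_iff hne, ← hx2]; ring
    rw [goal2, Finset.sum_div]
    refine Finset.sum_congr rfl fun j _ => ?_
    rw [div_pow, mul_div_assoc]
  have := lemL (a₁ x) (a x ^ 2) N c (fun j => χ j x / μ x) key
  exact ⟨this.1, by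
    have := this.2
    exact pow_eq_zero_iff (n := 2) (by norm_num) |>.mp this⟩
end

section
/- Let S be a semigroup, μ and μ₁ nonzero multiplicative functions on S, A an additive function on S∖I_μ, and a, a₁ additive functions on S∖I_{μ₁}. If Ψ_{μ₁}(a₁ + a²)(x) + Ψ_μ(A)(x) = Σ_{j=1}^N c_j χ_j(x) for all x ∈ S, where c_j ∈ ℂ and χ₁,…,χ_N are multiplicative functions on S, then a = 0 on S∖I_{μ₁}. (Here a² denotes the pointwise square x ↦ a(x)².) -/
open scoped BigOperators

variable {S : Type*}

open Polynomial in
/-- Difference operator on polynomials: `q ↦ C t * q(X+1) - C a * q`. -/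
noncomputable def PhiOp (a t : ℂ) (q : ℂ[X]) : ℂ[X] := C t * q.comp (X + 1) - C a * q

section SeqLemma

open Polynomial

lemma natDegree_X_add_one' : (X + 1 : ℂ[X]).natDegree = 1 := by
  simpa using natDegree_X_add_C (1 : ℂ)

lemma monic_X_add_one' : (X + 1 : ℂ[X]).Monic := by
  simpa using monic_X_add_C (1 : ℂ)

lemma natDegree_comp_X_add_one (q : ℂ[X]) : (q.comp (X + 1)).natDegree = q.natDegree := by
  simp [natDegree_comp, natDegree_X_add_one']

lemma leadingCoeff_comp_X_add_one (q : ℂ[X]) :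
    (q.comp (X + 1)).leadingCoeff = q.leadingCoeff := by
  by_cases hq : q.natDegree = 0
  · obtain ⟨c, rfl⟩ := natDegree_eq_zero.mp hq
    simp
  · rw [leadingCoeff_comp (by rw [natDegree_X_add_one']; norm_num)]
    simp [monic_X_add_one'.leadingCoeff]

lemma coeff_comp_natDegree (q : ℂ[X]) :
    (q.comp (X + 1)).coeff q.natDegree = q.leadingCoeff := by
  conv_lhs => rw [← natDegree_comp_X_add_one q]
  rw [coeff_natDegree, leadingCoeff_comp_X_add_one]

lemma PhiOp_ne_zero {a t : ℂ} (hta : t ≠ a) {q : ℂ[X]} (hq : q ≠ 0) : PhiOp a t q ≠ 0 := by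
  intro h0
  have hd : (PhiOp a t q).coeff q.natDegree = (t - a) * q.leadingCoeff := by
    simp only [PhiOp, coeff_sub, coeff_C_mul, coeff_comp_natDegree, coeff_natDegree]
    ring
  rw [h0] at hd
  simp only [coeff_zero] at hd
  rcases mul_eq_zero.mp hd.symm with h | h
  · exact hta (sub_eq_zero.mp h)
  · exact hq (leadingCoeff_eq_zero.mp h)

lemma PhiOp_zero (a t : ℂ) : PhiOp a t 0 = 0 := by simp [PhiOp]

lemma PhiOp_iter_zero (a t : ℂ) (k : ℕ) : (PhiOp a t)^[k] 0 = 0 :=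
  Function.iterate_fixed (PhiOp_zero a t) k

lemma PhiOp_iter_eq_zero {a t : ℂ} (hta : t ≠ a) {k : ℕ} {q : ℂ[X]}
    (h : (PhiOp a t)^[k] q = 0) : q = 0 := by
  induction k generalizing q with
  | zero => simpa using h
  | succ n ih =>
    rw [Function.iterate_succ_apply] at h
    have h1 : PhiOp a t q = 0 := ih h
    by_contra hq
    exact PhiOp_ne_zero hta hq h1

lemma comp_sub_self (q : ℂ[X]) :
    q.comp (X + 1) - q = 0 ∨ (q.comp (X + 1) - q).natDegree < q.natDegree := by
  by_cases h0 : q.comp (X + 1) - q = 0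
  · exact Or.inl h0
  · right
    set r := q.comp (X + 1) - q with hr
    have hle : r.natDegree ≤ q.natDegree := by
      refine le_trans (natDegree_sub_le _ _) ?_
      simp [natDegree_comp_X_add_one]
    have hcoeff : r.coeff q.natDegree = 0 := by
      simp [hr, coeff_sub, coeff_comp_natDegree, coeff_natDegree]
    rcases lt_or_eq_of_le hle with h | h
    · exact h
    · exfalso
      have : r.coeff r.natDegree ≠ 0 := by
        rw [coeff_natDegree]
        exact leadingCoeff_ne_zero.mpr h0
      rw [h] at this
      exact this hcoeff

lemma PhiOp_self_iter (a : ℂ) : ∀ (d : ℕ) (q : ℂ[X]), q.natDegree ≤ d →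
    (PhiOp a a)^[d + 1] q = 0 := by
  intro d
  induction d with
  | zero =>
    intro q hq
    obtain ⟨c, rfl⟩ := natDegree_eq_zero.mp (Nat.le_zero.mp hq)
    simp [PhiOp]
  | succ n ih =>
    intro q hq
    have hfact : PhiOp a a q = C a * (q.comp (X + 1) - q) := by
      simp [PhiOp]; ring
    rw [Function.iterate_succ_apply, hfact]
    rcases comp_sub_self q with h | h
    · rw [h, mul_zero, PhiOp_iter_zero]
    · have hdle : (C a * (q.comp (X + 1) - q)).natDegree ≤ n := by
        refine le_trans (natDegree_C_mul_le _ _) ?_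
        omega
      exact ih _ hdle

lemma transform_step (T : Finset ℂ) (a : ℂ) (p : ℂ → ℂ[X])
    (h : ∀ n : ℕ, ∑ t ∈ T, (p t).eval ((n : ℂ) + 1) * t ^ (n + 1) = 0) :
    ∀ n : ℕ, ∑ t ∈ T, (PhiOp a t (p t)).eval ((n : ℂ) + 1) * t ^ (n + 1) = 0 := by
  intro n
  have key : ∀ t ∈ T, (PhiOp a t (p t)).eval ((n : ℂ) + 1) * t ^ (n + 1)
      = (p t).eval ((n : ℂ) + 1 + 1) * t ^ (n + 1 + 1)
        - a * ((p t).eval ((n : ℂ) + 1) * t ^ (n + 1)) := by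
    intro t _
    simp only [PhiOp, eval_sub, eval_mul, eval_C, eval_comp, eval_add, eval_X, eval_one]
    ring
  rw [Finset.sum_congr rfl key, Finset.sum_sub_distrib]
  have h1 := h (n + 1)
  push_cast at h1 ⊢
  rw [h1]
  rw [← Finset.mul_sum, h n]
  ring

/-- Linear independence of exponential-polynomial sequences: if a finite sum
`∑ₜ pₜ(n) tⁿ` vanishes for all `n ≥ 1` with distinct nonzero bases `t`, then all
polynomials `pₜ` vanish. -/
lemma seq_lemma : ∀ (T : Finset ℂ), ∀ (p : ℂ → ℂ[X]), (0 : ℂ) ∉ T →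
    (∀ n : ℕ, ∑ t ∈ T, (p t).eval ((n : ℂ) + 1) * t ^ (n + 1) = 0) →
    ∀ t ∈ T, p t = 0 := by
  intro T
  induction T using Finset.induction_on with
  | empty => intro p _ _ t ht; simp at ht
  | @insert t₀ T' ht₀ IH =>
    intro p h0 h
    set m := (p t₀).natDegree + 1 with hm
    have hiter : ∀ k : ℕ, ∀ n : ℕ,
        ∑ t ∈ insert t₀ T', ((PhiOp t₀ t)^[k] (p t)).eval ((n : ℂ) + 1) * t ^ (n + 1) = 0 := by
      intro k
      induction k with
      | zero => simpa using h
      | succ j ihk =>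
        have := transform_step (insert t₀ T') t₀ (fun t => (PhiOp t₀ t)^[j] (p t)) ihk
        intro n
        have h2 := this n
        simpa [Function.iterate_succ_apply'] using h2
    have hT' : ∀ n : ℕ,
        ∑ t ∈ T', ((PhiOp t₀ t)^[m] (p t)).eval ((n : ℂ) + 1) * t ^ (n + 1) = 0 := by
      intro n
      have h2 := hiter m n
      rw [Finset.sum_insert ht₀] at h2
      rw [PhiOp_self_iter t₀ (p t₀).natDegree (p t₀) le_rfl] at h2
      simpa using h2
    have h0' : (0 : ℂ) ∉ T' := fun hc => h0 (Finset.mem_insert_of_mem hc)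
    have hres := IH (fun t => (PhiOp t₀ t)^[m] (p t)) h0' hT'
    have hTz : ∀ t ∈ T', p t = 0 := by
      intro t ht
      have htne : t ≠ t₀ := fun hc => ht₀ (hc ▸ ht)
      exact PhiOp_iter_eq_zero htne (hres t ht)
    have ht₀0 : t₀ ≠ 0 := fun hc => h0 (hc ▸ Finset.mem_insert_self t₀ T')
    have heval : ∀ n : ℕ, (p t₀).eval ((n : ℂ) + 1) = 0 := by
      intro n
      have h2 := h n
      rw [Finset.sum_insert ht₀] at h2
      have hz : ∑ t ∈ T', (p t).eval ((n : ℂ) + 1) * t ^ (n + 1) = 0 := by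
        apply Finset.sum_eq_zero
        intro t ht
        rw [hTz t ht]; simp
      rw [hz, add_zero] at h2
      exact (mul_eq_zero.mp h2).resolve_right (pow_ne_zero _ ht₀0)
    have hpt₀ : p t₀ = 0 := by
      apply Polynomial.eq_zero_of_infinite_isRoot
      refine Set.infinite_of_injective_forall_mem
        (f := fun n : ℕ => (n : ℂ) + 1) ?_ ?_
      · intro n1 n2 hnn
        have h3 : (n1 : ℂ) + 1 = (n2 : ℂ) + 1 := hnn
        have : (n1 : ℂ) = n2 := by
          have := add_right_cancel h3
          exact this
        exact_mod_cast this
      · intro n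
        exact heval n
    intro t ht
    rcases Finset.mem_insert.mp ht with rfl | ht'
    · exact hpt₀
    · exact hTz t ht'

end SeqLemma

/-- `pwS x n = x^(n+1)` in a semigroup. -/
def pwS [Semigroup S] (x : S) : ℕ → S
  | 0 => x
  | n + 1 => pwS x n * x

lemma mult_pwS [Semigroup S] {μ : S → ℂ} (hμ : IsMultiplicativeFn μ) (x : S) :
    ∀ n : ℕ, μ (pwS x n) = μ x ^ (n + 1) := by
  intro n
  induction n with
  | zero => simp [pwS]
  | succ k ih => rw [pwS, hμ, ih]; ring

lemma add_pwS [Semigroup S] {μ₁ f : S → ℂ} (hμ₁ : IsMultiplicativeFn μ₁)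
    (hf : IsAdditiveOnSet f {x : S | μ₁ x ≠ 0}) {x : S} (hx : μ₁ x ≠ 0) :
    ∀ n : ℕ, f (pwS x n) = ((n : ℂ) + 1) * f x := by
  intro n
  induction n with
  | zero => simp [pwS]
  | succ k ih =>
    have hmem : pwS x k ∈ {x : S | μ₁ x ≠ 0} := by
      simp only [Set.mem_setOf_eq, mult_pwS hμ₁]
      exact pow_ne_zero _ hx
    rw [pwS, hf _ hmem _ hx, ih]
    push_cast
    ring

/-- If `Ψ_{μ₁}(a₁ + a²) + Ψ_μ(A)` equals a linear combination of
multiplicative functions on `S`, then `a = 0` on `S∖I_{μ₁}`. -/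
theorem stmt7 [Semigroup S] (μ μ₁ : S → ℂ)
    (hμ : IsMultiplicativeFn μ) (hμ0 : μ ≠ 0)
    (hμ₁ : IsMultiplicativeFn μ₁) (hμ₁0 : μ₁ ≠ 0)
    (A : S → ℂ) (hA : IsAdditiveOnSet A {x : S | μ x ≠ 0})
    (a a₁ : S → ℂ)
    (ha : IsAdditiveOnSet a {x : S | μ₁ x ≠ 0})
    (ha₁ : IsAdditiveOnSet a₁ {x : S | μ₁ x ≠ 0})
    (N : ℕ) (c : Fin N → ℂ) (χ : Fin N → S → ℂ)
    (hχ : ∀ j, IsMultiplicativeFn (χ j))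
    (h : ∀ x : S,
      PsiFn μ₁ (fun t => a₁ t + (a t) ^ 2) x + PsiFn μ A x = ∑ j, c j * χ j x) :
    ∀ x : S, μ₁ x ≠ 0 → a x = 0 := by
  classical
  intro x hx
  have star : ∀ n : ℕ,
      μ₁ x ^ (n + 1) * (((n : ℂ) + 1) * a₁ x + (((n : ℂ) + 1) * a x) ^ 2)
        + μ x ^ (n + 1) * (((n : ℂ) + 1) * A x)
      = ∑ j, c j * (χ j x) ^ (n + 1) := by
    intro n
    have hh := h (pwS x n)
    have h1 : PsiFn μ₁ (fun t => a₁ t + (a t) ^ 2) (pwS x n)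
        = μ₁ x ^ (n + 1) * (((n : ℂ) + 1) * a₁ x + (((n : ℂ) + 1) * a x) ^ 2) := by
      simp only [PsiFn, mult_pwS hμ₁]
      rw [if_neg (pow_ne_zero _ hx)]
      rw [add_pwS hμ₁ ha₁ hx n, add_pwS hμ₁ ha hx n]
    have h2 : PsiFn μ A (pwS x n) = μ x ^ (n + 1) * (((n : ℂ) + 1) * A x) := by
      by_cases hρ : μ x = 0
      · simp only [PsiFn, mult_pwS hμ, hρ]
        rw [if_pos (by simp), zero_pow (Nat.succ_ne_zero n), zero_mul]
      · simp only [PsiFn, mult_pwS hμ]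
        rw [if_neg (pow_ne_zero _ hρ), add_pwS hμ hA hρ n]
    rw [h1, h2] at hh
    rw [hh]
    exact Finset.sum_congr rfl (fun j _ => by rw [mult_pwS (hχ j) x n])
  set T : Finset ℂ :=
    (insert (μ₁ x) (insert (μ x) (Finset.image (fun j => χ j x) Finset.univ))).filter
      (fun t => t ≠ 0) with hT
  set p : ℂ → Polynomial ℂ := fun t =>
    (if t = μ₁ x then Polynomial.C (a₁ x) * Polynomial.X
        + Polynomial.C ((a x) ^ 2) * Polynomial.X ^ 2 else 0)
      + (if t = μ x then Polynomial.C (A x) * Polynomial.X else 0)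
      - ∑ j ∈ Finset.univ.filter (fun j => χ j x = t), Polynomial.C (c j) with hp
  have h0T : (0 : ℂ) ∉ T := by simp [hT]
  have hlamT : μ₁ x ∈ T := by
    rw [hT, Finset.mem_filter]
    exact ⟨Finset.mem_insert_self _ _, hx⟩
  have hsum : ∀ n : ℕ, ∑ t ∈ T, (p t).eval ((n : ℂ) + 1) * t ^ (n + 1) = 0 := by
    intro n
    have hsplit : ∑ t ∈ T, (p t).eval ((n : ℂ) + 1) * t ^ (n + 1)
        = (∑ t ∈ T, (if t = μ₁ x then Polynomial.C (a₁ x) * Polynomial.X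
              + Polynomial.C ((a x) ^ 2) * Polynomial.X ^ 2 else 0).eval ((n : ℂ) + 1)
            * t ^ (n + 1))
          + (∑ t ∈ T, (if t = μ x then Polynomial.C (A x) * Polynomial.X else 0).eval
              ((n : ℂ) + 1) * t ^ (n + 1))
          - (∑ t ∈ T, (∑ j ∈ Finset.univ.filter (fun j => χ j x = t),
              Polynomial.C (c j)).eval ((n : ℂ) + 1) * t ^ (n + 1)) := by
      rw [← Finset.sum_add_distrib, ← Finset.sum_sub_distrib]
      refine Finset.sum_congr rfl (fun t _ => ?_)
      simp only [hp, Polynomial.eval_add, Polynomial.eval_sub]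
      ring
    have hS1 : ∑ t ∈ T, (if t = μ₁ x then Polynomial.C (a₁ x) * Polynomial.X
          + Polynomial.C ((a x) ^ 2) * Polynomial.X ^ 2 else 0).eval ((n : ℂ) + 1)
          * t ^ (n + 1)
        = μ₁ x ^ (n + 1) * (((n : ℂ) + 1) * a₁ x + (((n : ℂ) + 1) * a x) ^ 2) := by
      rw [Finset.sum_eq_single_of_mem _ hlamT (fun t _ htne => by rw [if_neg htne]; simp)]
      rw [if_pos rfl]
      simp only [Polynomial.eval_add, Polynomial.eval_mul, Polynomial.eval_C,
        Polynomial.eval_X, Polynomial.eval_pow]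
      ring
    have hS2 : ∑ t ∈ T, (if t = μ x then Polynomial.C (A x) * Polynomial.X else 0).eval
          ((n : ℂ) + 1) * t ^ (n + 1)
        = μ x ^ (n + 1) * (((n : ℂ) + 1) * A x) := by
      by_cases hρ : μ x = 0
      · rw [Finset.sum_eq_zero, hρ, zero_pow (Nat.succ_ne_zero n), zero_mul]
        intro t ht
        have ht0 : t ≠ 0 := (Finset.mem_filter.mp ht).2
        rw [if_neg (by rw [hρ]; exact ht0)]
        simp
      · have hρT : μ x ∈ T := by
          rw [hT, Finset.mem_filter]
          exact ⟨Finset.mem_insert_of_mem (Finset.mem_insert_self _ _), hρ⟩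
        rw [Finset.sum_eq_single_of_mem _ hρT (fun t _ htne => by rw [if_neg htne]; simp)]
        rw [if_pos rfl]
        simp only [Polynomial.eval_mul, Polynomial.eval_C, Polynomial.eval_X]
        ring
    have hS3 : ∑ t ∈ T, (∑ j ∈ Finset.univ.filter (fun j => χ j x = t),
          Polynomial.C (c j)).eval ((n : ℂ) + 1) * t ^ (n + 1)
        = ∑ j, c j * (χ j x) ^ (n + 1) := by
      have e1 : ∀ t ∈ T, (∑ j ∈ Finset.univ.filter (fun j => χ j x = t),
            Polynomial.C (c j)).eval ((n : ℂ) + 1) * t ^ (n + 1)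
          = ∑ j ∈ (Finset.univ.filter (fun j => χ j x ≠ 0)).filter (fun j => χ j x = t),
              c j * (χ j x) ^ (n + 1) := by
        intro t ht
        have ht0 : t ≠ 0 := (Finset.mem_filter.mp ht).2
        have hfeq : Finset.univ.filter (fun j => χ j x = t)
            = (Finset.univ.filter (fun j => χ j x ≠ 0)).filter (fun j => χ j x = t) := by
          rw [Finset.filter_filter]
          apply Finset.filter_congr
          intro j _
          constructor
          · intro he
            exact ⟨by rw [he]; exact ht0, he⟩
          · exact fun hp' => hp'.2
        rw [Polynomial.eval_finset_sum]
        simp only [Polynomial.eval_C]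
        rw [Finset.sum_mul, hfeq]
        refine Finset.sum_congr rfl (fun j hj => ?_)
        rw [(Finset.mem_filter.mp hj).2]
      rw [Finset.sum_congr rfl e1]
      rw [Finset.sum_fiberwise_of_maps_to (fun j hj => ?_) (fun j => c j * (χ j x) ^ (n + 1))]
      · apply Finset.sum_filter_of_ne
        intro j _ hfne
        intro hz
        apply hfne
        rw [hz, zero_pow (Nat.succ_ne_zero n), mul_zero]
      · have hjne : χ j x ≠ 0 := (Finset.mem_filter.mp hj).2
        rw [hT, Finset.mem_filter]
        refine ⟨Finset.mem_insert_of_mem (Finset.mem_insert_of_mem ?_), hjne⟩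
        exact Finset.mem_image_of_mem _ (Finset.mem_univ j)
    rw [hsplit, hS1, hS2, hS3]
    linear_combination star n
  have hpz : p (μ₁ x) = 0 := seq_lemma T p h0T hsum (μ₁ x) hlamT
  have hc2 : (p (μ₁ x)).coeff 2 = (a x) ^ 2 := by
    have e1 : (Polynomial.C (a₁ x) * Polynomial.X
        + Polynomial.C ((a x) ^ 2) * Polynomial.X ^ 2).coeff 2 = (a x) ^ 2 := by
      rw [Polynomial.coeff_add, Polynomial.coeff_C_mul, Polynomial.coeff_C_mul,
        Polynomial.coeff_X, Polynomial.coeff_X_pow]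
      norm_num
    have e2 : (if μ₁ x = μ x then Polynomial.C (A x) * Polynomial.X
        else (0 : Polynomial ℂ)).coeff 2 = 0 := by
      split_ifs with hcase
      · rw [Polynomial.coeff_C_mul]
        simp [Polynomial.coeff_X]
      · simp
    have e3 : (∑ j ∈ Finset.univ.filter (fun j => χ j x = μ₁ x),
        Polynomial.C (c j)).coeff 2 = 0 := by
      rw [Polynomial.finset_sum_coeff]
      apply Finset.sum_eq_zero
      intro j _
      simp [Polynomial.coeff_C]
    simp only [hp, eq_self_iff_true, if_true, Polynomial.coeff_sub, Polynomial.coeff_add,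
      Polynomial.coeff_C_mul, Polynomial.coeff_X, Polynomial.coeff_X_pow,
      Polynomial.finset_sum_coeff, Polynomial.coeff_C,
      apply_ite (fun q : Polynomial ℂ => q.coeff 2), Polynomial.coeff_zero, ite_self,
      mul_zero, mul_one, Finset.sum_const_zero, add_zero, zero_add, sub_zero]
    norm_num
  rw [hpz, Polynomial.coeff_zero] at hc2
  exact pow_eq_zero_iff (Nat.succ_ne_zero 1) |>.mp hc2.symm
end

section
/- Let S be a semigroup, μ and μ₁ nonzero multiplicative functions on S, A an additive function on S∖I_μ, and a, a₁ additive functions on S∖I_{μ₁}. If Ψ_μ(A)(x) = Ψ_{μ₁}(a₁ + a²)(x) for all x ∈ S, then a = 0 on S∖I_{μ₁}. (Here a² denotes the pointwise square x ↦ a(x)².) -/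
open scoped BigOperators

variable {S : Type*}

/-- If `Ψ_μ(A) = Ψ_{μ₁}(a₁ + a²)` on `S`, then `a = 0` on
`S∖I_{μ₁}`. -/
theorem stmt8 [Semigroup S] (μ μ₁ : S → ℂ)
    (hμ : IsMultiplicativeFn μ) (hμ0 : μ ≠ 0)
    (hμ₁ : IsMultiplicativeFn μ₁) (hμ₁0 : μ₁ ≠ 0)
    (A : S → ℂ) (hA : IsAdditiveOnSet A {x : S | μ x ≠ 0})
    (a a₁ : S → ℂ)
    (ha : IsAdditiveOnSet a {x : S | μ₁ x ≠ 0})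
    (ha₁ : IsAdditiveOnSet a₁ {x : S | μ₁ x ≠ 0})
    (h : ∀ x : S, PsiFn μ A x = PsiFn μ₁ (fun t => a₁ t + (a t) ^ 2) x) :
    ∀ x : S, μ₁ x ≠ 0 → a x = 0 := by
  intro x hx
  have hx2 : μ₁ (x * x) ≠ 0 := by rw [hμ₁]; exact mul_ne_zero hx hx
  have hx3 : μ₁ (x * x * x) ≠ 0 := by rw [hμ₁]; exact mul_ne_zero hx2 hx
  have ea2 : a (x * x) = a x + a x := ha x hx x hx
  have ea3 : a (x * x * x) = a x + a x + a x := by rw [ha _ hx2 _ hx, ea2]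
  have eb2 : a₁ (x * x) = a₁ x + a₁ x := ha₁ x hx x hx
  have eb3 : a₁ (x * x * x) = a₁ x + a₁ x + a₁ x := by rw [ha₁ _ hx2 _ hx, eb2]
  have h1 := h x
  have h2 := h (x * x)
  have h3 := h (x * x * x)
  simp only [PsiFn, if_neg hx, if_neg hx2, if_neg hx3] at h1 h2 h3
  rw [ea2, eb2, hμ₁ x x] at h2
  rw [ea3, eb3, hμ₁ (x * x) x, hμ₁ x x] at h3
  by_cases hm : μ x = 0
  · have hm2 : μ (x * x) = 0 := by rw [hμ x x, hm, zero_mul]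
    rw [if_pos hm] at h1
    rw [if_pos hm2] at h2
    have e1 : a₁ x + a x ^ 2 = 0 := by
      rcases mul_eq_zero.mp h1.symm with hz | hz
      · exact absurd hz hx
      · exact hz
    have e2 : a₁ x + a₁ x + (a x + a x) ^ 2 = 0 := by
      rcases mul_eq_zero.mp h2.symm with hz | hz
      · exact absurd hz (mul_ne_zero hx hx)
      · exact hz
    have hα : a x ^ 2 = 0 := by linear_combination e2 / 2 - e1
    exact pow_eq_zero_iff (two_ne_zero) |>.mp hα
  · have hm2 : μ (x * x) ≠ 0 := by rw [hμ x x]; exact mul_ne_zero hm hm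
    have hm3 : μ (x * x * x) ≠ 0 := by rw [hμ (x * x) x]; exact mul_ne_zero hm2 hm
    have eA2 : A (x * x) = A x + A x := hA x hm x hm
    have eA3 : A (x * x * x) = A x + A x + A x := by rw [hA _ hm2 _ hm, eA2]
    rw [if_neg hm] at h1
    rw [if_neg hm2, eA2, hμ x x] at h2
    rw [if_neg hm3, eA3, hμ (x * x) x, hμ x x] at h3
    -- h1 : μ x * A x = μ₁ x * (a₁ x + a x ^ 2)
    -- h2 : μ x * μ x * (A x + A x) = μ₁ x * μ₁ x * (a₁ x + a₁ x + (a x + a x) ^ 2)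
    -- h3 : μ x * μ x * μ x * (A x + A x + A x)
    --      = μ₁ x * μ₁ x * μ₁ x * (a₁ x + a₁ x + a₁ x + (a x + a x + a x) ^ 2)
    have key : μ₁ x ^ 2 * (a x ^ 2 * (μ₁ x - μ x)) = 0 := by
      linear_combination (-(μ x * μ₁ x)) * h1 + ((μ x + μ₁ x) / 2) * h2 - h3 / 3
    have key' : a x ^ 2 * (μ₁ x - μ x) = 0 :=
      (mul_eq_zero.mp key).resolve_left (pow_ne_zero 2 hx)
    rcases mul_eq_zero.mp key' with hα | hd
    · exact pow_eq_zero_iff (two_ne_zero) |>.mp hα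
    · have hEq : μ₁ x = μ x := sub_eq_zero.mp hd
      rw [hEq] at h1 h2
      have key2 : μ x ^ 2 * (2 * a x ^ 2) = 0 := by
        linear_combination 2 * μ x * h1 - h2
      have : 2 * a x ^ 2 = 0 := (mul_eq_zero.mp key2).resolve_left (pow_ne_zero 2 hm)
      have hα : a x ^ 2 = 0 := by linear_combination this / 2
      exact pow_eq_zero_iff (two_ne_zero) |>.mp hα
end

section
/- Let S be a semigroup, μ and μ₁ nonzero multiplicative functions on S, A, A₁ additive functions on S∖I_μ, and a, a₁ additive functions on S∖I_{μ₁}. Assume a ≠ 0 and A ≠ 0. If Ψ_{μ₁}(a₁ + a²)(x) = Ψ_μ(A₁ + A²)(x) for all x ∈ S, then μ = μ₁, a₁ = A₁, and either a = A or a = −A. (Here a² and A² denote pointwise squares.) -/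
open scoped BigOperators

variable {S : Type*}

/-- `itMul x n = x^(n+1)`. -/
private def itMul [Semigroup S] (x : S) : ℕ → S
  | 0 => x
  | n+1 => itMul x n * x

private lemma mult_itMul [Semigroup S] {χ : S → ℂ} (hχ : IsMultiplicativeFn χ) (x : S) :
    ∀ n, χ (itMul x n) = χ x ^ (n+1)
  | 0 => by simp [itMul]
  | (n+1) => by rw [itMul, hχ, mult_itMul hχ x n]; ring

private lemma add_itMul [Semigroup S] {χ g : S → ℂ} (hχ : IsMultiplicativeFn χ)
    (hg : IsAdditiveOnSet g {x | χ x ≠ 0}) {x : S} (hx : χ x ≠ 0) :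
    ∀ n, g (itMul x n) = ((n : ℂ) + 1) * g x
  | 0 => by simp [itMul]
  | (n+1) => by
      have hmem : χ (itMul x n) ≠ 0 := by
        rw [mult_itMul hχ]; exact pow_ne_zero _ hx
      rw [itMul, hg _ hmem _ hx, add_itMul hχ hg hx n]
      push_cast; ring

private lemma alg4 {b c u v U V : ℂ} (hb : b ≠ 0) (hc : c ≠ 0) (hv : v ≠ 0)
    (e1 : b * (u + v) = c * (U + V))
    (e2 : b^2 * (u + 2*v) = c^2 * (U + 2*V))
    (e3 : b^3 * (u + 3*v) = c^3 * (U + 3*V))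
    (e4 : b^4 * (u + 4*v) = c^4 * (U + 4*V)) :
    c = b ∧ U = u ∧ V = v := by
  by_cases hcb : c = b
  · subst hcb
    refine ⟨rfl, ?_, ?_⟩
    · have h1 : u + v = U + V := mul_left_cancel₀ hc e1
      have h2 : u + 2*v = U + 2*V := mul_left_cancel₀ (pow_ne_zero 2 hc) e2
      linear_combination h2 - 2*h1
    · have h1 : u + v = U + V := mul_left_cancel₀ hc e1
      have h2 : u + 2*v = U + 2*V := mul_left_cancel₀ (pow_ne_zero 2 hc) e2
      linear_combination h1 - h2
  · exfalso
    have hb2 : b^2*v = c*(c*(U+2*V) - b*(U+V)) := by linear_combination e2 - b*e1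
    have hb3 : b^3*v = c^2*(c*(U+3*V) - b*(U+2*V)) := by linear_combination e3 - b*e2
    have hb4 : b^4*v = c^3*(c*(U+4*V) - b*(U+3*V)) := by linear_combination e4 - b*e3
    have h12 : b*(c*(U+2*V) - b*(U+V)) = c*(c*(U+3*V) - b*(U+2*V)) := by
      apply mul_left_cancel₀ hc
      linear_combination hb3 - b*hb2
    have h23 : b*(c*(U+3*V) - b*(U+2*V)) = c*(c*(U+4*V) - b*(U+3*V)) := by
      apply mul_left_cancel₀ (pow_ne_zero 2 hc)
      linear_combination hb4 - b*hb3
    have hcbne : c - b ≠ 0 := sub_ne_zero.mpr hcb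
    have key2 : c*(U+3*V) - b*(U+2*V) = -(b*V) := by
      have h0 : (c - b) * ((c*(U+3*V) - b*(U+2*V)) + b*V) = 0 := by
        linear_combination -h12
      have h1 := (mul_eq_zero.mp h0).resolve_left hcbne
      linear_combination h1
    have key3 : c*(U+4*V) - b*(U+3*V) = -(b*V) := by
      have h0 : (c - b) * ((c*(U+4*V) - b*(U+3*V)) + b*V) = 0 := by
        linear_combination -h23
      have h1 := (mul_eq_zero.mp h0).resolve_left hcbne
      linear_combination h1
    have hV : V = 0 := by
      have h0 : b*c^2*V*(c-b) = 0 := by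
        linear_combination hb4 - b*hb3 - b*c^2*key2 + c^3*key3
      have h1 := (mul_eq_zero.mp h0).resolve_right hcbne
      exact (mul_eq_zero.mp h1).resolve_left (mul_ne_zero hb (pow_ne_zero 2 hc))
    have hv0 : b^3 * v = 0 := by
      linear_combination hb3 + c^2*key2 - b*c^2*hV
    exact hv ((mul_eq_zero.mp hv0).resolve_left (pow_ne_zero 3 hb))

private lemma keypt [Semigroup S] {μ μ₁ A A₁ a a₁ : S → ℂ}
    (hμ : IsMultiplicativeFn μ) (hμ₁ : IsMultiplicativeFn μ₁)
    (hA : IsAdditiveOnSet A {x : S | μ x ≠ 0})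
    (hA₁ : IsAdditiveOnSet A₁ {x : S | μ x ≠ 0})
    (ha : IsAdditiveOnSet a {x : S | μ₁ x ≠ 0})
    (ha₁ : IsAdditiveOnSet a₁ {x : S | μ₁ x ≠ 0})
    (h : ∀ x : S, PsiFn μ₁ (fun t => a₁ t + (a t) ^ 2) x
        = PsiFn μ (fun t => A₁ t + (A t) ^ 2) x)
    {x : S} (hx : μ₁ x ≠ 0) (hax : a x ≠ 0) :
    μ x = μ₁ x ∧ a₁ x = A₁ x ∧ (a x)^2 = (A x)^2 := by
  have hμ₁n : ∀ n, μ₁ (itMul x n) ≠ 0 := fun n => by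
    rw [mult_itMul hμ₁]; exact pow_ne_zero _ hx
  have hμx : μ x ≠ 0 := by
    intro h0
    have hz : ∀ n : ℕ, ((n : ℂ)+1) * a₁ x + (((n : ℂ)+1) * a x)^2 = 0 := by
      intro n
      have hμz : μ (itMul x n) = 0 := by rw [mult_itMul hμ, h0]; simp
      have hh := h (itMul x n)
      simp only [PsiFn] at hh
      rw [if_neg (hμ₁n n), if_pos hμz] at hh
      rw [add_itMul hμ₁ ha₁ hx, add_itMul hμ₁ ha hx] at hh
      exact (mul_eq_zero.mp hh).resolve_left (hμ₁n n)
    have e0 := hz 0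
    have e1 := hz 1
    push_cast at e0 e1
    have : a x ^ 2 = 0 := by linear_combination e1/2 - e0
    exact hax (sq_eq_zero_iff.mp this)
  have hμn : ∀ n, μ (itMul x n) ≠ 0 := fun n => by
    rw [mult_itMul hμ]; exact pow_ne_zero _ hμx
  have q : ∀ n : ℕ, μ₁ x ^ (n+1) * (((n : ℂ)+1) * a₁ x + (((n : ℂ)+1) * a x)^2)
      = μ x ^ (n+1) * (((n : ℂ)+1) * A₁ x + (((n : ℂ)+1) * A x)^2) := by
    intro n
    have hh := h (itMul x n)
    simp only [PsiFn] at hh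
    rw [if_neg (hμ₁n n), if_neg (hμn n)] at hh
    rw [mult_itMul hμ₁, mult_itMul hμ, add_itMul hμ₁ ha₁ hx, add_itMul hμ₁ ha hx,
        add_itMul hμ hA₁ hμx, add_itMul hμ hA hμx] at hh
    exact hh
  have q0 := q 0
  have q1 := q 1
  have q2 := q 2
  have q3 := q 3
  push_cast at q0 q1 q2 q3
  have e1 : μ₁ x * (a₁ x + (a x)^2) = μ x * (A₁ x + (A x)^2) := by
    linear_combination q0
  have e2 : (μ₁ x)^2 * (a₁ x + 2*(a x)^2) = (μ x)^2 * (A₁ x + 2*(A x)^2) := by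
    have h2 : (2:ℂ) * ((μ₁ x)^2 * (a₁ x + 2*(a x)^2))
        = 2 * ((μ x)^2 * (A₁ x + 2*(A x)^2)) := by linear_combination q1
    exact mul_left_cancel₀ (by norm_num : (2:ℂ) ≠ 0) h2
  have e3 : (μ₁ x)^3 * (a₁ x + 3*(a x)^2) = (μ x)^3 * (A₁ x + 3*(A x)^2) := by
    have h3 : (3:ℂ) * ((μ₁ x)^3 * (a₁ x + 3*(a x)^2))
        = 3 * ((μ x)^3 * (A₁ x + 3*(A x)^2)) := by linear_combination q2
    exact mul_left_cancel₀ (by norm_num : (3:ℂ) ≠ 0) h3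
  have e4 : (μ₁ x)^4 * (a₁ x + 4*(a x)^2) = (μ x)^4 * (A₁ x + 4*(A x)^2) := by
    have h4 : (4:ℂ) * ((μ₁ x)^4 * (a₁ x + 4*(a x)^2))
        = 4 * ((μ x)^4 * (A₁ x + 4*(A x)^2)) := by linear_combination q3
    exact mul_left_cancel₀ (by norm_num : (4:ℂ) ≠ 0) h4
  obtain ⟨h1, h2, h3⟩ := alg4 hx hμx (pow_ne_zero 2 hax) e1 e2 e3 e4
  exact ⟨h1, h2.symm, h3.symm⟩

private lemma zf [Semigroup S] {μ μ₁ a a₁ : S → ℂ} {ψ : S → ℂ}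
    (hμ : IsMultiplicativeFn μ) (hμ₁ : IsMultiplicativeFn μ₁)
    (ha : IsAdditiveOnSet a {x : S | μ₁ x ≠ 0})
    (ha₁ : IsAdditiveOnSet a₁ {x : S | μ₁ x ≠ 0})
    (h : ∀ x : S, PsiFn μ₁ (fun t => a₁ t + (a t) ^ 2) x = PsiFn μ ψ x)
    {x₀ : S} (hx₀ : μ₁ x₀ ≠ 0) (hax₀ : a x₀ ≠ 0)
    {y : S} (hy : μ₁ y ≠ 0) (hμy : μ y = 0) : False := by
  have key : ∀ n : ℕ, (((n : ℂ)+1) * a₁ x₀ + a₁ y)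
      + (((n : ℂ)+1) * a x₀ + a y)^2 = 0 := by
    intro n
    have hmem : μ₁ (itMul x₀ n) ≠ 0 := by
      rw [mult_itMul hμ₁]; exact pow_ne_zero _ hx₀
    have hz₁ : μ₁ (itMul x₀ n * y) ≠ 0 := by
      rw [hμ₁]; exact mul_ne_zero hmem hy
    have hz : μ (itMul x₀ n * y) = 0 := by rw [hμ, hμy, mul_zero]
    have hh := h (itMul x₀ n * y)
    simp only [PsiFn] at hh
    rw [if_neg hz₁, if_pos hz] at hh
    rw [ha₁ _ hmem _ hy, ha _ hmem _ hy,
        add_itMul hμ₁ ha₁ hx₀, add_itMul hμ₁ ha hx₀] at hh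
    exact (mul_eq_zero.mp hh).resolve_left hz₁
  have k0 := key 0
  have k1 := key 1
  have k2 := key 2
  push_cast at k0 k1 k2
  have : a x₀ ^ 2 = 0 := by linear_combination (k0 + k2)/2 - k1
  exact hax₀ (sq_eq_zero_iff.mp this)

/-- If `Ψ_{μ₁}(a₁ + a²) = Ψ_μ(A₁ + A²)` with `a ≠ 0` and `A ≠ 0`,
then `μ = μ₁`, `a₁ = A₁`, and `a = A` or `a = -A` (on the common domain). -/
theorem stmt9 [Semigroup S] (μ μ₁ : S → ℂ)
    (hμ : IsMultiplicativeFn μ) (hμ0 : μ ≠ 0)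
    (hμ₁ : IsMultiplicativeFn μ₁) (hμ₁0 : μ₁ ≠ 0)
    (A A₁ : S → ℂ)
    (hA : IsAdditiveOnSet A {x : S | μ x ≠ 0})
    (hA₁ : IsAdditiveOnSet A₁ {x : S | μ x ≠ 0})
    (a a₁ : S → ℂ)
    (ha : IsAdditiveOnSet a {x : S | μ₁ x ≠ 0})
    (ha₁ : IsAdditiveOnSet a₁ {x : S | μ₁ x ≠ 0})
    (hane : ∃ x : S, μ₁ x ≠ 0 ∧ a x ≠ 0)
    (hAne : ∃ x : S, μ x ≠ 0 ∧ A x ≠ 0)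
    (h : ∀ x : S, PsiFn μ₁ (fun t => a₁ t + (a t) ^ 2) x
        = PsiFn μ (fun t => A₁ t + (A t) ^ 2) x) :
    μ = μ₁ ∧ (∀ x : S, μ₁ x ≠ 0 → a₁ x = A₁ x) ∧
      ((∀ x : S, μ₁ x ≠ 0 → a x = A x) ∨ (∀ x : S, μ₁ x ≠ 0 → a x = -A x)) := by
  obtain ⟨x₀, hx₀, hax₀⟩ := hane
  obtain ⟨X, hX, hAX⟩ := hAne
  have hsets : ∀ y : S, μ y ≠ 0 ↔ μ₁ y ≠ 0 := by
    intro y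
    constructor
    · intro hy
      by_contra h0
      exact zf hμ₁ hμ hA hA₁ (fun x => (h x).symm) hX hAX hy h0
    · intro hy
      by_contra h0
      exact zf hμ hμ₁ ha ha₁ h hx₀ hax₀ hy h0
  have key2 : ∀ y : S, μ₁ y ≠ 0 →
      μ y = μ₁ y ∧ a₁ y = A₁ y ∧ (a y)^2 = (A y)^2 := by
    intro y hy
    by_cases hay : a y = 0
    · have hz₁ : μ₁ (y * x₀) ≠ 0 := by rw [hμ₁]; exact mul_ne_zero hy hx₀
      have haz : a (y * x₀) ≠ 0 := by
        rw [ha _ hy _ hx₀, hay, zero_add]; exact hax₀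
      obtain ⟨hm, h1, _⟩ := keypt hμ hμ₁ hA hA₁ ha ha₁ h hz₁ haz
      obtain ⟨hm0, h10, _⟩ := keypt hμ hμ₁ hA hA₁ ha ha₁ h hx₀ hax₀
      have hμy : μ y ≠ 0 := (hsets y).mpr hy
      have hμx₀' : μ x₀ ≠ 0 := (hsets x₀).mpr hx₀
      have hmy : μ y = μ₁ y := by
        have hmul : μ y * μ x₀ = μ₁ y * μ₁ x₀ := by
          rw [← hμ, ← hμ₁]; exact hm
        rw [hm0] at hmul
        exact mul_right_cancel₀ hx₀ hmul
      have h1y : a₁ y = A₁ y := by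
        have e : a₁ y + a₁ x₀ = A₁ y + A₁ x₀ := by
          rw [← ha₁ _ hy _ hx₀, ← hA₁ _ hμy _ hμx₀']; exact h1
        linear_combination e - h10
      have hAy : A y = 0 := by
        have hh := h y
        simp only [PsiFn] at hh
        rw [if_neg hy, if_neg hμy] at hh
        rw [hay, h1y, hmy] at hh
        have hc := mul_left_cancel₀ hy hh
        have h2 : (A y)^2 = 0 := by linear_combination -hc
        exact sq_eq_zero_iff.mp h2
      exact ⟨hmy, h1y, by rw [hay, hAy]⟩
    · exact keypt hμ hμ₁ hA hA₁ ha ha₁ h hy hay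
  have hμeq : μ = μ₁ := by
    funext y
    by_cases hy : μ₁ y = 0
    · rw [hy]
      by_contra hne
      exact (hsets y).mp hne hy
    · exact (key2 y hy).1
  refine ⟨hμeq, fun y hy => (key2 y hy).2.1, ?_⟩
  by_cases hex : ∃ u : S, μ₁ u ≠ 0 ∧ a u ≠ 0 ∧ a u ≠ A u
  · right
    obtain ⟨u, hu, hau, hne⟩ := hex
    have hu2 := (key2 u hu).2.2
    have huneg : a u = -A u := by
      have hf : (a u - A u) * (a u + A u) = 0 := by linear_combination hu2
      rcases mul_eq_zero.mp hf with h' | h'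
      · exact absurd (by linear_combination h') hne
      · linear_combination h'
    intro y hy
    by_cases hay : a y = 0
    · have h2 := (key2 y hy).2.2
      rw [hay] at h2
      have hAy : A y = 0 := sq_eq_zero_iff.mp (by linear_combination -h2)
      rw [hay, hAy, neg_zero]
    · have h2 := (key2 y hy).2.2
      have hyy : a y = A y ∨ a y = -A y := by
        have hf : (a y - A y) * (a y + A y) = 0 := by linear_combination h2
        rcases mul_eq_zero.mp hf with h' | h'
        · left; linear_combination h'
        · right; linear_combination h'
      rcases hyy with h' | h'
      · by_cases hA' : a y = -A y
        · exact hA'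
        · exfalso
          have hw₁ : μ₁ (u * y) ≠ 0 := by rw [hμ₁]; exact mul_ne_zero hu hy
          have haw : a (u * y) = a u + a y := ha _ hu _ hy
          have hAw : A (u * y) = A u + A y :=
            hA _ ((hsets u).mpr hu) _ ((hsets y).mpr hy)
          by_cases hw0 : a (u * y) = 0
          · have h2w := (key2 _ hw₁).2.2
            rw [hw0] at h2w
            have hAw0 : A (u * y) = 0 := sq_eq_zero_iff.mp (by linear_combination -h2w)
            have hAsum : A u + A y = 0 := by rw [← hAw]; exact hAw0
            have h0 : a u + a y = 0 := by rw [← haw]; exact hw0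
            exact hay (by linear_combination h0/2 + hAsum/2 - huneg/2 + h'/2)
          · have h2w := (key2 _ hw₁).2.2
            rw [haw, hAw] at h2w
            have hAu : A u = -a u := by linear_combination huneg
            have hAy : A y = a y := h'.symm
            rw [hAu, hAy] at h2w
            have hmul : a u * a y = 0 := by linear_combination h2w/4
            rcases mul_eq_zero.mp hmul with h'' | h''
            · exact hau h''
            · exact hay h''
      · exact h'
  · left
    push_neg at hex
    intro y hy
    by_cases hay : a y = 0
    · have h2 := (key2 y hy).2.2
      rw [hay] at h2
      have hAy : A y = 0 := sq_eq_zero_iff.mp (by linear_combination -h2)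
      rw [hay, hAy]
    · exact hex y hy hay
end

section
/- Let S be a semigroup and g, h : S → ℂ. If there exists a nonzero function f : S → ℂ with f ∈ 𝒮_g ∩ 𝒮_h (i.e. f(xy) = f(x)g(y) + g(x)f(y) and f(xy) = f(x)h(y) + h(x)f(y) for all x,y ∈ S), then g = h. -/
open scoped BigOperators

variable {S : Type*}

theorem eq_zero_of_mul_add_mul_eq_zero {X R : Type*} [CommRing R] [NoZeroDivisors R]
    [NeZero (2 : R)] {f d : X → R} (hf : f ≠ 0) (h : ∀ x y, f x * d y + d x * f y = 0) :
    d = 0 := by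
  obtain ⟨x₀, hx₀⟩ : ∃ x, f x ≠ 0 := Function.ne_iff.mp hf
  have hd₀ : d x₀ = 0 := by
    have : 2 * f x₀ * d x₀ = 0 := by linear_combination h x₀ x₀
    exact (mul_eq_zero.mp this).resolve_left (mul_ne_zero two_ne_zero hx₀)
  funext y
  have : f x₀ * d y = 0 := by simpa [hd₀] using h x₀ y
  exact (mul_eq_zero.mp this).resolve_left hx₀

/-- If a nonzero `f` lies in `𝒮_g ∩ 𝒮_h`, then `g = h`. -/
theorem stmt10 [Semigroup S] (g h f : S → ℂ) (hf : f ≠ 0)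
    (hg : ∀ x y : S, f (x * y) = f x * g y + g x * f y)
    (hh : ∀ x y : S, f (x * y) = f x * h y + h x * f y) :
    g = h := by
  have hgh : g - h = 0 :=
    eq_zero_of_mul_add_mul_eq_zero hf fun x y => by
      simp only [Pi.sub_apply]
      linear_combination (hg x y).symm.trans (hh x y)
  exact sub_eq_zero.mp hgh
end

section
/- Let S be a semigroup, μ, χ nonzero multiplicative functions on S, a an additive function on S∖I_χ, and A an additive function on S∖I_μ, with a ≠ 0 or A ≠ 0. If Ψ_χ(a)(x) = Ψ_μ(A)(x) for all x ∈ S, then μ = χ and a = A. -/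
open scoped BigOperators

variable {S : Type*}

/-- If `Ψ_χ(a) = Ψ_μ(A)` with `a ≠ 0` or `A ≠ 0`, then `μ = χ`
and `a = A` (on the common domain). -/
theorem stmt11 [Semigroup S] (μ χ : S → ℂ)
    (hμ : IsMultiplicativeFn μ) (hμ0 : μ ≠ 0)
    (hχ : IsMultiplicativeFn χ) (hχ0 : χ ≠ 0)
    (a : S → ℂ) (ha : IsAdditiveOnSet a {x : S | χ x ≠ 0})
    (A : S → ℂ) (hA : IsAdditiveOnSet A {x : S | μ x ≠ 0})
    (hne : (∃ x : S, χ x ≠ 0 ∧ a x ≠ 0) ∨ (∃ x : S, μ x ≠ 0 ∧ A x ≠ 0))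
    (h : ∀ x : S, PsiFn χ a x = PsiFn μ A x) :
    μ = χ ∧ (∀ x : S, χ x ≠ 0 → a x = A x) := by
  -- First obtain a point x₀ where everything is nonzero.
  obtain ⟨x₀, hχ₀, ha₀, hμ₀, hA₀⟩ :
      ∃ x₀ : S, χ x₀ ≠ 0 ∧ a x₀ ≠ 0 ∧ μ x₀ ≠ 0 ∧ A x₀ ≠ 0 := by
    rcases hne with ⟨x, hx, hax⟩ | ⟨x, hx, hAx⟩
    · have hh := h x
      simp only [PsiFn, if_neg hx] at hh
      by_cases hm : μ x = 0
      · rw [if_pos hm] at hh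
        exact absurd hh (mul_ne_zero hx hax)
      · rw [if_neg hm] at hh
        refine ⟨x, hx, hax, hm, fun h0 => ?_⟩
        rw [h0, mul_zero] at hh
        exact mul_ne_zero hx hax hh
    · have hh := h x
      simp only [PsiFn, if_neg hx] at hh
      by_cases hc : χ x = 0
      · rw [if_pos hc] at hh
        exact absurd hh.symm (mul_ne_zero hx hAx)
      · rw [if_neg hc] at hh
        refine ⟨x, hc, fun h0 => ?_, hx, hAx⟩
        rw [h0, mul_zero] at hh
        exact mul_ne_zero hx hAx hh.symm
  -- χ x ≠ 0 → μ x ≠ 0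
  have hNM : ∀ x : S, χ x ≠ 0 → μ x ≠ 0 := by
    intro x hx hm
    have h1 := h x
    have h2 := h (x * x₀)
    have hχxx : χ (x * x₀) ≠ 0 := by rw [hχ]; exact mul_ne_zero hx hχ₀
    have hμxx : μ (x * x₀) = 0 := by rw [hμ, hm, zero_mul]
    simp only [PsiFn, if_neg hx, if_pos hm] at h1
    simp only [PsiFn, if_neg hχxx, if_pos hμxx] at h2
    have hax : a x = 0 := by
      rcases mul_eq_zero.mp h1 with h' | h'
      · exact absurd h' hx
      · exact h'
    rw [ha x hx x₀ hχ₀, hax, zero_add] at h2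
    rcases mul_eq_zero.mp h2 with h' | h'
    · exact hχxx h'
    · exact ha₀ h'
  -- μ x ≠ 0 → χ x ≠ 0
  have hMN : ∀ x : S, μ x ≠ 0 → χ x ≠ 0 := by
    intro x hx hc
    have h1 := h x
    have h2 := h (x * x₀)
    have hμxx : μ (x * x₀) ≠ 0 := by rw [hμ]; exact mul_ne_zero hx hμ₀
    have hχxx : χ (x * x₀) = 0 := by rw [hχ, hc, zero_mul]
    simp only [PsiFn, if_pos hc, if_neg hx] at h1
    simp only [PsiFn, if_pos hχxx, if_neg hμxx] at h2
    have hAx : A x = 0 := by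
      rcases mul_eq_zero.mp h1.symm with h' | h'
      · exact absurd h' hx
      · exact h'
    rw [hA x hx x₀ hμ₀, hAx, zero_add] at h2
    rcases mul_eq_zero.mp h2.symm with h' | h'
    · exact hμxx h'
    · exact hA₀ h'
  -- the key pointwise identity on the common domain
  have key : ∀ x : S, χ x ≠ 0 → χ x * a x = μ x * A x := by
    intro x hx
    have h1 := h x
    simp only [PsiFn, if_neg hx, if_neg (hNM x hx)] at h1
    exact h1
  -- χ x₀ = μ x₀
  have hx0eq : χ x₀ = μ x₀ := by
    have k1 := key x₀ hχ₀
    have hχsq : χ (x₀ * x₀) ≠ 0 := by rw [hχ]; exact mul_ne_zero hχ₀ hχ₀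
    have k2 := key (x₀ * x₀) hχsq
    rw [hχ, hμ, ha x₀ hχ₀ x₀ hχ₀, hA x₀ hμ₀ x₀ hμ₀] at k2
    -- χx₀² * (2 a x₀) = μx₀² * (2 A x₀)
    have : χ x₀ * (χ x₀ * a x₀) = μ x₀ * (χ x₀ * a x₀) := by
      ring_nf at k2 ⊢
      linear_combination k2 / 2 - μ x₀ * k1
    have h2 := mul_right_cancel₀ (mul_ne_zero hχ₀ ha₀) this
    exact h2
  have hA0eq : a x₀ = A x₀ := by
    have k1 := key x₀ hχ₀
    rw [← hx0eq] at k1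
    exact mul_left_cancel₀ hχ₀ k1
  -- χ = μ on the common domain
  have hchimu : ∀ x : S, χ x ≠ 0 → χ x = μ x := by
    intro x hx
    have hm := hNM x hx
    have hχxx : χ (x * x₀) ≠ 0 := by rw [hχ]; exact mul_ne_zero hx hχ₀
    have k2 := key (x * x₀) hχxx
    rw [hχ, hμ, ha x hx x₀ hχ₀, hA x hm x₀ hμ₀] at k2
    have k1 := key x hx
    -- χx χx₀ (ax + ax₀) = μx μx₀ (Ax + Ax₀); μx₀ = χx₀, Ax₀ = ax₀, μx Ax = χx ax
    have : χ x * (χ x₀ * a x₀) = μ x * (χ x₀ * a x₀) := by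
      rw [← hx0eq, ← hA0eq] at k2
      ring_nf at k2 ⊢
      linear_combination k2 - χ x₀ * k1
    exact mul_right_cancel₀ (mul_ne_zero hχ₀ ha₀) this
  constructor
  · funext x
    by_cases hx : χ x = 0
    · rw [hx]
      by_contra hm
      exact (hMN x hm) hx
    · exact (hchimu x hx).symm
  · intro x hx
    have k1 := key x hx
    rw [← hchimu x hx] at k1
    exact mul_left_cancel₀ hx k1
end

section
/- Let S be a semigroup generated by its squares. The pairs of functions f, g : S → ℂ with f ≠ 0 satisfying f(xy) = f(x)g(y) + g(x)f(y) for all x,y ∈ S are exactly the following: (1) f = α(χ₁ − χ₂) and g = (χ₁ + χ₂)/2, where χ₁, χ₂ are multiplicative functions on S with χ₁ ≠ χ₂ and α ∈ ℂ∖{0}; (2) f = Ψ_χ(A) and g = χ, where χ is a nonzero multiplicative function on S and A is a nonzero additive function on S∖I_χ. -/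
open scoped BigOperators

variable {S : Type*}

/-- Key lemma: with a point where `f` is nonzero, the companion `g` satisfies
`g(xy) = g(x)g(y) + c f(x) f(y)` for some constant `c`. -/
lemma companion_eq [Semigroup S] {f g : S → ℂ}
    (hf : ∀ x y : S, f (x * y) = f x * g y + g x * f y)
    {z₀ : S} (hz₀ : f z₀ ≠ 0) :
    ∀ x y : S, g (x * y) = g x * g y +
      ((g (z₀ * z₀) - g z₀ * g z₀) / (f z₀ * f z₀)) * f x * f y := by
  have key : ∀ x y z : S,
      (g (x * y) - g x * g y) * f z = f x * (g (y * z) - g y * g z) := by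
    intro x y z
    have h1 := hf (x * y) z
    have h2 := hf x (y * z)
    rw [mul_assoc, hf x y] at h1
    rw [hf y z] at h2
    rw [h1] at h2
    linear_combination h2
  intro x y
  have k1 := key x y z₀
  have k2 := key y z₀ z₀
  have h3 : (g (x * y) - g x * g y) * (f z₀ * f z₀) =
      (g (z₀ * z₀) - g z₀ * g z₀) * (f x * f y) := by
    linear_combination f z₀ * k1 + f x * k2
  have hne : f z₀ * f z₀ ≠ 0 := mul_ne_zero hz₀ hz₀
  field_simp
  linear_combination h3

/-- On a semigroup generated by its squares, the nonzero
solutions `f` (with companion `g`) of the sine addition law are exactly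
`f = α(χ₁ − χ₂)`, `g = (χ₁ + χ₂)/2`, or `f = Ψ_χ(A)`, `g = χ`. -/
theorem stmt15 [Semigroup S] (hS : SquareGenerated S) (f g : S → ℂ) :
    (f ≠ 0 ∧ ∀ x y : S, f (x * y) = f x * g y + g x * f y) ↔
    ((∃ (χ₁ χ₂ : S → ℂ) (α : ℂ),
        IsMultiplicativeFn χ₁ ∧ IsMultiplicativeFn χ₂ ∧ χ₁ ≠ χ₂ ∧ α ≠ 0 ∧
        f = (fun x => α * (χ₁ x - χ₂ x)) ∧ g = (fun x => (χ₁ x + χ₂ x) / 2)) ∨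
     (∃ χ A : S → ℂ,
        IsMultiplicativeFn χ ∧ χ ≠ 0 ∧
        IsAdditiveOnSet A {x : S | χ x ≠ 0} ∧ (∃ x : S, χ x ≠ 0 ∧ A x ≠ 0) ∧
        f = PsiFn χ A ∧ g = χ)) := by
  constructor
  · rintro ⟨hf0, hf⟩
    obtain ⟨z₀, hz₀⟩ : ∃ z₀, f z₀ ≠ 0 := by
      by_contra h
      push_neg at h
      exact hf0 (funext fun x => h x)
    set c : ℂ := (g (z₀ * z₀) - g z₀ * g z₀) / (f z₀ * f z₀) with hc
    have hg : ∀ x y, g (x * y) = g x * g y + c * f x * f y := companion_eq hf hz₀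
    by_cases hcz : c = 0
    · -- case c = 0 : g is multiplicative
      right
      have hmul : IsMultiplicativeFn g := by
        intro x y; rw [hg x y, hcz]; ring
      have hgne : g ≠ 0 := by
        intro h0
        -- then f vanishes on all products and squares, so f = 0 by square generation
        apply hf0
        funext x
        refine Subsemigroup.closure_induction
          (p := fun x _ => f x = 0) ?_ ?_ (hS x)
        · rintro w ⟨z, rfl⟩
          rw [hf z z, h0]; simp
        · intro a b _ _ _ _
          rw [hf a b, h0]; simp
      -- f vanishes where g vanishes
      have hvan : ∀ x : S, g x = 0 → f x = 0 := by
        intro x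
        refine Subsemigroup.closure_induction
          (p := fun x _ => g x = 0 → f x = 0) ?_ ?_ (hS x)
        · rintro w ⟨z, rfl⟩ hw
          have hz : g z = 0 := by
            have := hmul z z
            rw [hw] at this
            exact (mul_self_eq_zero).mp this.symm
          rw [hf z z, hz]; ring
        · intro a b _ _ iha ihb hab
          rw [hmul a b] at hab
          rcases mul_eq_zero.mp hab with h | h
          · rw [hf a b, iha h, h]; ring
          · rw [hf a b, ihb h, h]; ring
      refine ⟨g, fun x => f x / g x, hmul, hgne, ?_, ?_, ?_, rfl⟩
      · intro x hx y hy
        simp only [Set.mem_setOf_eq] at hx hy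
        dsimp only
        have hxy : g (x * y) = g x * g y := hmul x y
        rw [hxy, hf x y]
        field_simp
      · obtain ⟨x, hx⟩ : ∃ x, f x ≠ 0 := by
          by_contra h; push_neg at h; exact hf0 (funext fun x => h x)
        have hgx : g x ≠ 0 := fun h => hx (hvan x h)
        exact ⟨x, hgx, div_ne_zero hx hgx⟩
      · funext x
        by_cases hx : g x = 0
        · simp [PsiFn, hx, hvan x hx]
        · simp only [PsiFn, hx, if_false]
          field_simp
    · -- case c ≠ 0 : two multiplicative functions
      left
      obtain ⟨d, hd⟩ := (IsAlgClosed.exists_pow_nat_eq c two_pos : ∃ d : ℂ, d ^ 2 = c)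
      have hdne : d ≠ 0 := by
        intro h; apply hcz; rw [← hd, h]; ring
      refine ⟨fun x => g x + d * f x, fun x => g x - d * f x, 1 / (2 * d),
        ?_, ?_, ?_, ?_, ?_, ?_⟩
      · intro x y
        dsimp only
        rw [hg x y, hf x y, ← hd]; ring
      · intro x y
        dsimp only
        rw [hg x y, hf x y, ← hd]; ring
      · intro h
        have := congrFun h z₀
        apply hz₀
        have : 2 * d * f z₀ = 0 := by linear_combination this
        rcases mul_eq_zero.mp this with h' | h'
        · exact absurd h' (by simpa using hdne)
        · exact h'
      · simp [hdne]
      · funext x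
        field_simp
        ring
      · funext x
        ring
  · rintro (⟨χ₁, χ₂, α, h₁, h₂, hne, hα, hfe, hge⟩ | ⟨χ, A, hχ, hχ0, hA, ⟨x₀, hx₀, hA₀⟩, hfe, hge⟩)
    · constructor
      · intro h0
        apply hne
        funext x
        have := congrFun (hfe ▸ h0) x
        simp only [Pi.zero_apply] at this
        rcases mul_eq_zero.mp this with h | h
        · exact absurd h hα
        · exact sub_eq_zero.mp h
      · intro x y
        rw [hfe, hge]
        simp only
        rw [h₁ x y, h₂ x y]
        ring
    · constructor
      · intro h0
        have := congrFun (hfe ▸ h0) x₀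
        simp only [Pi.zero_apply, PsiFn, hx₀, if_false] at this
        exact (mul_ne_zero hx₀ hA₀) this.symm.symm
      · intro x y
        rw [hfe, hge]
        simp only [PsiFn]
        rw [hχ x y]
        by_cases hx : χ x = 0
        · simp [hx]
        · by_cases hy : χ y = 0
          · simp [hy]
          · rw [if_neg hx, if_neg hy, if_neg (mul_ne_zero hx hy),
              hA x hx y hy]
            ring
end
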